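/- arXiv:1105.4785 — 8 statements merged into one kernel-verified Lean document; each statement's English description precedes it below -/
import Mathlib

section
/- If Γ is a finitely generated rigid group, then Γ is FAb; that is, every finite-index subgroup Λ of Γ has finite abelianization Λ/[Λ,Λ]. -/
/-- Two `n`-dimensional complex representations are equivalent if they are
conjugate by an element of `GL_n(ℂ)`. -/
def RepEquiv {G : Type*} [Group G] {n : ℕ}
    (ρ₁ ρ₂ : G →* Matrix.GeneralLinearGroup (Fin n) ℂ) : Prop :=
  ∃ M : Matrix.GeneralLinearGroup (Fin n) ℂ, ∀ g : G, ρ₁ g = M * ρ₂ g * M⁻¹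

/-- An `n`-dimensional complex representation is irreducible if the only
invariant subspaces of `ℂ^n` are `⊥` and `⊤`. -/
def IsIrreducibleRep {G : Type*} [Group G] {n : ℕ}
    (ρ : G →* Matrix.GeneralLinearGroup (Fin n) ℂ) : Prop :=
  ∀ W : Submodule ℂ (Fin n → ℂ),
    (∀ g : G, ∀ v ∈ W, Matrix.mulVec (ρ g : Matrix (Fin n) (Fin n) ℂ) v ∈ W) →
    W = ⊥ ∨ W = ⊤

/-- A group is rigid if for every `n ≥ 1` it has, up to equivalence, only
finitely many irreducible `n`-dimensional complex representations. -/
def IsRigid (G : Type*) [Group G] : Prop :=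
  ∀ n : ℕ, 1 ≤ n →
    ∃ S : Set (G →* Matrix.GeneralLinearGroup (Fin n) ℂ), S.Finite ∧
      ∀ ρ : G →* Matrix.GeneralLinearGroup (Fin n) ℂ,
        IsIrreducibleRep ρ → ∃ σ ∈ S, RepEquiv ρ σ

/-- A group is FAb if every finite-index subgroup has finite abelianization. -/
def IsFAb (G : Type*) [Group G] : Prop :=
  ∀ Λ : Subgroup G, Λ.FiniteIndex → Finite (Abelianization Λ)

/-!
Suppose a finite-index subgroup of `Γ` has infinite abelianization. Its normal core `N` has finite
index, is finitely generated, and still has infinite abelianization, so it surjects onto `ℤ` by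
some `π`. For every integer `t ≥ 2` induce the character `x ↦ t ^ π x` of `N` to `Γ` and pick an
irreducible subrepresentation `σ_t`, of dimension at most `[Γ : N]`. On `N` the induced
representation is diagonal, with the conjugate characters `x ↦ t ^ π (r⁻¹ x r)` on the diagonal,
so `σ_t` has a joint eigenvalue on `N`, and all of them are among these conjugates. Rigidity leaves
only finitely many classes of such `σ_t`, so `σ_s ≅ σ_t` for some `s ≠ t`, and a conjugate of
`s ^ π` equals a conjugate of `t ^ π`. Evaluating at preimages of `1` under both conjugates of `π`
gives `s ≤ t` and `t ≤ s`.
-/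

open Function Matrix Module Finset

theorem Abelianization.finite_of_finiteIndex {G : Type*} [Group G] (H : Subgroup G)
    [H.FiniteIndex] [Finite (Abelianization H)] : Finite (Abelianization G) := by
  set φ := Abelianization.map H.subtype
  have hle : H ≤ φ.range.comap of := fun x hx => ⟨of ⟨x, hx⟩, map_of H.subtype _⟩
  have : (φ.range.comap of).FiniteIndex := Subgroup.finiteIndex_of_le hle
  have : φ.range.FiniteIndex :=
    ⟨Subgroup.index_comap_of_surjective φ.range (f := of) QuotientGroup.mk_surjective ▸
      this.index_ne_zero⟩
  have : Finite φ.range := Finite.of_surjective _ φ.rangeRestrict_surjective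
  exact (Subgroup.finite_iff_finite_and_finiteIndex φ.range).2 ⟨inferInstance, inferInstance⟩

theorem AddCommGroup.exists_surjective_int (A : Type*) [AddCommGroup A] [AddGroup.FG A]
    [Infinite A] : ∃ f : A →+ ℤ, Surjective f := by
  obtain ⟨n, ι, _, p, hp, e, ⟨φ⟩⟩ := AddCommGroup.equiv_free_prod_directSum_zmod A
  have : ∀ i, NeZero (p i ^ e i) := fun i => ⟨pow_ne_zero _ (hp i).ne_zero⟩
  have : Finite (DirectSum ι fun i => ZMod (p i ^ e i)) :=
    Finite.of_equiv _ DFinsupp.equivFunOnFintype.symm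
  obtain ⟨k, rfl⟩ : ∃ k, n = k + 1 := by
    refine Nat.exists_eq_add_one.2 (Nat.pos_of_ne_zero ?_)
    rintro rfl
    have : Finite A := Finite.of_equiv _ φ.symm.toEquiv
    exact not_finite A
  refine ⟨(Finsupp.applyAddHom 0).comp ((AddMonoidHom.fst _ _).comp φ.toAddMonoidHom),
    fun z => ⟨φ.symm (Finsupp.single 0 z, 0), by simp⟩⟩

theorem Subgroup.exists_normal_finiteIndex_surjective_int {G : Type*} [Group G] [Group.FG G]
    (Λ : Subgroup G) [Λ.FiniteIndex] [Infinite (Abelianization Λ)] :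
    ∃ N : Subgroup G, N.Normal ∧ N.FiniteIndex ∧ ∃ π : N →* Multiplicative ℤ, Surjective π := by
  refine ⟨Λ.normalCore, Λ.normalCore_normal, inferInstance, ?_⟩
  have : Infinite (Abelianization Λ.normalCore) := by
    refine not_finite_iff_infinite.1 fun _ => ?_
    have : Finite (Abelianization (Λ.normalCore.subgroupOf Λ)) := Finite.of_equiv _
      (MulEquiv.abelianizationCongr (Subgroup.subgroupOfEquivOfLe Λ.normalCore_le)).symm.toEquiv
    have := Abelianization.finite_of_finiteIndex (Λ.normalCore.subgroupOf Λ)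
    exact not_finite (Abelianization Λ)
  have : Group.FG Λ.normalCore := Subgroup.fg_of_index_ne_zero _
  have : Group.FG (Abelianization Λ.normalCore) :=
    Group.fg_of_surjective (f := Abelianization.of) QuotientGroup.mk_surjective
  obtain ⟨f, hf⟩ := AddCommGroup.exists_surjective_int (Additive (Abelianization Λ.normalCore))
  exact ⟨(AddMonoidHom.toMultiplicativeRight f).comp Abelianization.of,
    hf.comp QuotientGroup.mk_surjective⟩

section Induced

variable {Γ : Type*} [Group Γ] (N : Subgroup Γ) {K : Type*} [CommRing K] (χ : N →* K)

theorem inv_out_mul_mul_out_mem_iff (g : Γ) (i j : Γ ⧸ N) :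
    (Quotient.out i)⁻¹ * g * Quotient.out j ∈ N ↔ ((g * Quotient.out j : Γ) : Γ ⧸ N) = i := by
  rw [mul_assoc, ← QuotientGroup.eq, QuotientGroup.out_eq', eq_comm]

open Classical in
noncomputable def inducedMatrix (g : Γ) : Matrix (Γ ⧸ N) (Γ ⧸ N) K :=
  fun i j => if h : (Quotient.out i)⁻¹ * g * Quotient.out j ∈ N then χ ⟨_, h⟩ else 0

theorem inducedMatrix_one [DecidableEq (Γ ⧸ N)] : inducedMatrix N χ 1 = 1 := by
  ext i j
  rcases eq_or_ne i j with rfl | hij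
  · have h1 : (Quotient.out i)⁻¹ * 1 * Quotient.out i = 1 := by group
    rw [one_apply_eq, inducedMatrix, dif_pos (by rw [h1]; exact N.one_mem), ← map_one χ]
    exact congrArg χ (Subtype.ext h1)
  · have h1 : (Quotient.out i)⁻¹ * 1 * Quotient.out j ∉ N := by
      rw [inv_out_mul_mul_out_mem_iff, one_mul, QuotientGroup.out_eq']
      exact hij.symm
    rw [one_apply_ne hij, inducedMatrix, dif_neg h1]

theorem inducedMatrix_mul [Fintype (Γ ⧸ N)] (g h : Γ) :
    inducedMatrix N χ (g * h) = inducedMatrix N χ g * inducedMatrix N χ h := by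
  ext i k
  set j : Γ ⧸ N := ((h * Quotient.out k : Γ) : Γ ⧸ N)
  have hh : (Quotient.out j)⁻¹ * h * Quotient.out k ∈ N := by
    rw [inv_out_mul_mul_out_mem_iff]
  have hfac : (Quotient.out i)⁻¹ * (g * h) * Quotient.out k =
      ((Quotient.out i)⁻¹ * g * Quotient.out j) * ((Quotient.out j)⁻¹ * h * Quotient.out k) := by
    group
  rw [mul_apply, Finset.sum_eq_single j]
  · by_cases hg : (Quotient.out i)⁻¹ * g * Quotient.out j ∈ N
    · have hgh := hfac ▸ N.mul_mem hg hh
      rw [inducedMatrix, inducedMatrix, inducedMatrix, dif_pos hg, dif_pos hh, dif_pos hgh,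
        ← map_mul]
      exact congrArg χ (Subtype.ext hfac)
    · have hgh : (Quotient.out i)⁻¹ * (g * h) * Quotient.out k ∉ N := fun hgh => by
        have := N.mul_mem hgh (N.inv_mem hh)
        rw [hfac, mul_inv_cancel_right] at this
        exact hg this
      rw [inducedMatrix, inducedMatrix, dif_neg hg, dif_neg hgh, zero_mul]
  · intro j' _ hj'
    have hh' : (Quotient.out j')⁻¹ * h * Quotient.out k ∉ N := by
      rwa [inv_out_mul_mul_out_mem_iff, eq_comm]
    rw [show inducedMatrix N χ h j' k = 0 from dif_neg hh', mul_zero]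
  · exact fun h => absurd (Finset.mem_univ j) h

noncomputable def inducedRep [Fintype (Γ ⧸ N)] [DecidableEq (Γ ⧸ N)] :
    Γ →* Matrix (Γ ⧸ N) (Γ ⧸ N) K where
  toFun := inducedMatrix N χ
  map_one' := inducedMatrix_one N χ
  map_mul' := inducedMatrix_mul N χ

noncomputable def cosetConj [N.Normal] (i : Γ ⧸ N) : N ≃* N := MulAut.conjNormal (Quotient.out i)⁻¹

theorem inducedRep_apply_coe [N.Normal] [Fintype (Γ ⧸ N)] [DecidableEq (Γ ⧸ N)] (x : N) :
    inducedRep N χ x = diagonal fun i => χ (cosetConj N i x) := by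
  show inducedMatrix N χ x = _
  ext i j
  have hconj : (cosetConj N i x : Γ) = (Quotient.out i)⁻¹ * x * Quotient.out i := by
    rw [cosetConj, MulAut.conjNormal_apply, inv_inv]
  rcases eq_or_ne i j with rfl | hij
  · rw [diagonal_apply_eq, inducedMatrix, dif_pos (hconj ▸ (cosetConj N i x).2)]
    exact congrArg χ (Subtype.ext hconj.symm)
  · have hx : (Quotient.out i)⁻¹ * x * Quotient.out j ∉ N := by
      rw [inv_out_mul_mul_out_mem_iff, QuotientGroup.mk_mul, (QuotientGroup.eq_one_iff _).2 x.2,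
        one_mul, QuotientGroup.out_eq']
      exact hij.symm
    rw [diagonal_apply_ne _ hij, inducedMatrix, dif_neg hx]

end Induced

noncomputable def finCoords (K V : Type*) [Field K] [AddCommGroup V] [Module K V]
    [FiniteDimensional K V] : V ≃ₗ[K] (Fin (finrank K V) → K) :=
  (finBasis K V).equivFun

section Restrict

variable {G K ι : Type*} [Group G] [Field K] [Fintype ι] [DecidableEq ι]
  (ρ : G →* Matrix ι ι K) {W : Submodule K (ι → K)} (hW : ∀ g, ∀ v ∈ W, ρ g *ᵥ v ∈ W)

noncomputable def restrictRep : G →* Matrix (Fin (finrank K W)) (Fin (finrank K W)) K where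
  toFun g := LinearMap.toMatrix' ((finCoords K W).toLinearMap ∘ₗ (ρ g).mulVecLin.restrict (hW g) ∘ₗ
    (finCoords K W).symm.toLinearMap)
  map_one' := by
    rw [← LinearMap.toMatrix'_id]
    congr 1
    refine LinearMap.ext fun v => ?_
    have : (ρ 1).mulVecLin.restrict (hW 1) ((finCoords K W).symm v) = (finCoords K W).symm v :=
      Subtype.ext (by simp)
    simp only [LinearMap.comp_apply, LinearEquiv.coe_coe, this, LinearEquiv.apply_symm_apply,
      LinearMap.id_apply]
  map_mul' g h := by
    rw [← LinearMap.toMatrix'_comp]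
    congr 1
    refine LinearMap.ext fun v => ?_
    have (w : W) : (ρ (g * h)).mulVecLin.restrict (hW (g * h)) w =
        (ρ g).mulVecLin.restrict (hW g) ((ρ h).mulVecLin.restrict (hW h) w) :=
      Subtype.ext <| show ρ (g * h) *ᵥ (w : ι → K) = ρ g *ᵥ (ρ h *ᵥ (w : ι → K)) by
        rw [map_mul, mulVec_mulVec]
    simp only [LinearMap.comp_apply, LinearEquiv.coe_coe, this, LinearEquiv.symm_apply_apply]

theorem restrictRep_intertwines (g : G) (v : Fin (finrank K W) → K) :
    (W.subtype ∘ₗ (finCoords K W).symm.toLinearMap) (restrictRep ρ hW g *ᵥ v) =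
      ρ g *ᵥ (W.subtype ∘ₗ (finCoords K W).symm.toLinearMap) v := by
  rw [restrictRep, MonoidHom.coe_mk, OneHom.coe_mk, LinearMap.toMatrix'_mulVec]
  simp only [LinearMap.comp_apply, LinearEquiv.coe_coe, LinearEquiv.symm_apply_apply,
    Submodule.subtype_apply]
  rfl

end Restrict

theorem isIrreducibleRep_restrictRep {G ι : Type*} [Group G] [Fintype ι] [DecidableEq ι]
    (ρ : G →* Matrix ι ι ℂ) {W : Submodule ℂ (ι → ℂ)} (hW : ∀ g, ∀ v ∈ W, ρ g *ᵥ v ∈ W)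
    (hmin : ∀ U : Submodule ℂ (ι → ℂ), U ≠ ⊥ → (∀ g, ∀ v ∈ U, ρ g *ᵥ v ∈ U) → ¬U < W) :
    IsIrreducibleRep (restrictRep ρ hW).toHomUnits := by
  set f := W.subtype ∘ₗ (finCoords ℂ W).symm.toLinearMap
  have hf : Injective f := W.injective_subtype.comp (finCoords ℂ W).symm.injective
  intro U hU
  refine or_iff_not_imp_left.2 fun hU0 => ?_
  have hfU0 : U.map f ≠ ⊥ := by
    rwa [← Submodule.map_bot f, (Submodule.map_injective_of_injective hf).ne_iff]
  have hfU : ∀ g, ∀ v ∈ U.map f, ρ g *ᵥ v ∈ U.map f := by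
    rintro g _ ⟨v, hv, rfl⟩
    exact ⟨_, hU g v hv, restrictRep_intertwines ρ hW g v⟩
  have hfUW : U.map f ≤ W :=
    Submodule.map_le_iff_le_comap.2 fun v _ => ((finCoords ℂ W).symm v).2
  apply Submodule.map_injective_of_injective hf
  rw [(hfUW.eq_or_lt.resolve_right (hmin _ hfU0 hfU)), Submodule.map_top,
    LinearMap.range_comp_of_range_eq_top _ (LinearEquiv.range _), Submodule.range_subtype]

theorem exists_irreducible_subrep {G ι : Type*} [Group G] [Fintype ι] [DecidableEq ι] [Nonempty ι]
    (ρ : G →* Matrix ι ι ℂ) :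
    ∃ (m : ℕ) (σ : G →* GL (Fin m) ℂ) (f : (Fin m → ℂ) →ₗ[ℂ] ι → ℂ),
      0 < m ∧ m ≤ Fintype.card ι ∧ IsIrreducibleRep σ ∧ Injective f ∧
        ∀ g v, f ((σ g : Matrix (Fin m) (Fin m) ℂ) *ᵥ v) = ρ g *ᵥ f v := by
  obtain ⟨W, ⟨hW0, hW⟩, hmin⟩ := wellFounded_lt.has_min
    {W : Submodule ℂ (ι → ℂ) | W ≠ ⊥ ∧ ∀ g, ∀ v ∈ W, ρ g *ᵥ v ∈ W}
    ⟨⊤, top_ne_bot, fun _ _ _ => Submodule.mem_top⟩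
  refine ⟨finrank ℂ W, (restrictRep ρ hW).toHomUnits, W.subtype ∘ₗ (finCoords ℂ W).symm.toLinearMap,
    Nat.pos_of_ne_zero (Submodule.finrank_eq_zero.not.2 hW0), by simpa using W.finrank_le,
    isIrreducibleRep_restrictRep ρ hW fun U hU0 hU => hmin U ⟨hU0, hU⟩,
    W.injective_subtype.comp (finCoords ℂ W).symm.injective, restrictRep_intertwines ρ hW⟩

section JointEigenvalues

variable {X K ι κ : Type*} [Field K] [Fintype ι] [Fintype κ]

def jointEigenvalues (A : X → Matrix ι ι K) : Set (X → K) :=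
  {μ | ∃ v ≠ 0, ∀ x, A x *ᵥ v = μ x • v}

theorem jointEigenvalues_subset_of_intertwining {A : X → Matrix κ κ K} {B : X → Matrix ι ι K}
    (f : (κ → K) →ₗ[K] ι → K) (hf : Injective f) (h : ∀ x v, f (A x *ᵥ v) = B x *ᵥ f v) :
    jointEigenvalues A ⊆ jointEigenvalues B := by
  rintro μ ⟨v, hv, hμ⟩
  exact ⟨f v, (map_ne_zero_iff f hf).2 hv, fun x => by rw [← h, hμ, map_smul]⟩

variable [DecidableEq ι]

theorem jointEigenvalues_diagonal_subset (d : X → ι → K) :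
    jointEigenvalues (fun x => diagonal (d x)) ⊆ Set.range fun i x => d x i := by
  rintro μ ⟨v, hv, hμ⟩
  obtain ⟨i, hi⟩ := Function.ne_iff.1 hv
  refine ⟨i, funext fun x => mul_right_cancel₀ hi ?_⟩
  simpa [mulVec_diagonal] using congrFun (hμ x) i

-- A nonzero vector of minimal support in `W` is a joint eigenvector.
theorem exists_jointEigenvector_of_diagonal_invariant (d : X → ι → K) {W : Submodule K (ι → K)}
    (hW : ∀ x, ∀ v ∈ W, diagonal (d x) *ᵥ v ∈ W) (hW0 : W ≠ ⊥) :
    ∃ v ∈ W, v ≠ 0 ∧ ∃ i, ∀ x, diagonal (d x) *ᵥ v = d x i • v := by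
  classical
  obtain ⟨v, ⟨hvW, hv0⟩, hmin⟩ := (measure fun v : ι → K => #{i | v i ≠ 0}).wf.has_min
    {v | v ∈ W ∧ v ≠ 0} ((Submodule.ne_bot_iff W).1 hW0)
  obtain ⟨i, hi⟩ := Function.ne_iff.1 hv0
  refine ⟨v, hvW, hv0, i, fun x => ?_⟩
  set w := diagonal (d x) *ᵥ v - d x i • v
  have hwW : w ∈ W := W.sub_mem (hW x v hvW) (W.smul_mem _ hvW)
  have hw : ∀ j, w j = (d x j - d x i) * v j := fun j => by
    simp only [w, Pi.sub_apply, mulVec_diagonal, Pi.smul_apply, smul_eq_mul]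
    ring
  have hsupp : ({j | w j ≠ 0} : Finset ι) ⊂ ({j | v j ≠ 0} : Finset ι) := by
    refine (Finset.ssubset_iff_of_subset fun j => ?_).2 ⟨i, by simpa using hi, by simp [hw]⟩
    simp only [Finset.mem_filter, Finset.mem_univ, true_and, hw]
    exact right_ne_zero_of_mul
  exact sub_eq_zero.1 (by_contra fun hw0 => hmin w ⟨hwW, hw0⟩ (Finset.card_lt_card hsupp))

theorem exists_mem_jointEigenvalues_of_intertwining_diagonal [Nonempty κ]
    {A : X → Matrix κ κ K} (d : X → ι → K) (f : (κ → K) →ₗ[K] ι → K) (hf : Injective f)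
    (h : ∀ x v, f (A x *ᵥ v) = diagonal (d x) *ᵥ f v) :
    ∃ i, (fun x => d x i) ∈ jointEigenvalues A := by
  have hW : ∀ x, ∀ v ∈ LinearMap.range f, diagonal (d x) *ᵥ v ∈ LinearMap.range f := by
    rintro x _ ⟨v, rfl⟩
    exact ⟨_, h x v⟩
  have hW0 : LinearMap.range f ≠ ⊥ :=
    (Submodule.ne_bot_iff _).2 ⟨f 1, ⟨1, rfl⟩, (map_ne_zero_iff f hf).2 one_ne_zero⟩
  obtain ⟨_, ⟨v, rfl⟩, hv0, i, hi⟩ := exists_jointEigenvector_of_diagonal_invariant d hW hW0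
  refine ⟨i, v, fun hv => hv0 (by rw [hv, map_zero]), fun x => hf ?_⟩
  rw [h, hi, map_smul]

end JointEigenvalues

section Weights

variable {G : Type*} [Group G] {n : ℕ}

def weightsOn (ρ : G →* GL (Fin n) ℂ) (H : Subgroup G) : Set (H → ℂ) :=
  jointEigenvalues fun x : H => (ρ x : Matrix (Fin n) (Fin n) ℂ)

theorem RepEquiv.symm {ρ₁ ρ₂ : G →* GL (Fin n) ℂ} (h : RepEquiv ρ₁ ρ₂) : RepEquiv ρ₂ ρ₁ := by
  obtain ⟨M, hM⟩ := h
  exact ⟨M⁻¹, fun g => by rw [hM, inv_inv]; group⟩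

theorem RepEquiv.weightsOn_subset {ρ₁ ρ₂ : G →* GL (Fin n) ℂ} (h : RepEquiv ρ₁ ρ₂)
    (H : Subgroup G) : weightsOn ρ₂ H ⊆ weightsOn ρ₁ H := by
  obtain ⟨M, hM⟩ := h
  refine jointEigenvalues_subset_of_intertwining (M : Matrix (Fin n) (Fin n) ℂ).mulVecLin
    (fun v w hvw => ?_) fun x v => ?_
  · simpa [mulVec_mulVec] using
      congrArg (((M⁻¹ : GL (Fin n) ℂ) : Matrix (Fin n) (Fin n) ℂ) *ᵥ ·) hvw
  · simp [hM, mulVec_mulVec, mul_assoc]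

theorem RepEquiv.weightsOn_eq {ρ₁ ρ₂ : G →* GL (Fin n) ℂ} (h : RepEquiv ρ₁ ρ₂)
    (H : Subgroup G) : weightsOn ρ₁ H = weightsOn ρ₂ H :=
  (h.symm.weightsOn_subset H).antisymm (h.weightsOn_subset H)

theorem IsRigid.finite_weightsOn (hG : IsRigid G) (H : Subgroup G) (d : ℕ) :
    Set.Finite
      {W | ∃ m ∈ Icc 1 d, ∃ σ : G →* GL (Fin m) ℂ, IsIrreducibleRep σ ∧ weightsOn σ H = W} := by
  have hfin (m : ℕ) (hm : 1 ≤ m) :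
      {W | ∃ σ : G →* GL (Fin m) ℂ, IsIrreducibleRep σ ∧ weightsOn σ H = W}.Finite := by
    obtain ⟨S, hS, hrep⟩ := hG m hm
    refine (hS.image fun s => weightsOn s H).subset ?_
    rintro _ ⟨σ, hσ, rfl⟩
    obtain ⟨s, hs, hσs⟩ := hrep σ hσ
    exact ⟨s, hs, (hσs.weightsOn_eq H).symm⟩
  refine ((Icc 1 d).finite_toSet.biUnion fun m hm => hfin m (mem_Icc.1 hm).1).subset ?_
  rintro W ⟨m, hm, hW⟩
  exact Set.mem_biUnion hm hW

end Weights

theorem exists_irreducible_weightsOn_induced {Γ : Type*} [Group Γ] (N : Subgroup Γ) [N.Normal]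
    [Fintype (Γ ⧸ N)] (χ : N →* ℂ) :
    ∃ m ∈ Icc 1 (Fintype.card (Γ ⧸ N)), ∃ σ : Γ →* GL (Fin m) ℂ, IsIrreducibleRep σ ∧
      (∃ i, (fun x => χ (cosetConj N i x)) ∈ weightsOn σ N) ∧
      weightsOn σ N ⊆ Set.range fun i x => χ (cosetConj N i x) := by
  classical
  obtain ⟨m, σ, f, hm, hmN, hσ, hf, hfσ⟩ := exists_irreducible_subrep (inducedRep N χ)
  have hfσN (x : N) (v : Fin m → ℂ) : f ((σ x : Matrix (Fin m) (Fin m) ℂ) *ᵥ v) =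
      diagonal (fun i => χ (cosetConj N i x)) *ᵥ f v := by
    rw [hfσ, inducedRep_apply_coe]
  have : Nonempty (Fin m) := ⟨⟨0, hm⟩⟩
  exact ⟨m, mem_Icc.2 ⟨hm, hmN⟩, σ, hσ,
    exists_mem_jointEigenvalues_of_intertwining_diagonal _ f hf hfσN,
    (jointEigenvalues_subset_of_intertwining f hf hfσN).trans (jointEigenvalues_diagonal_subset _)⟩

theorem norm_le_of_zpow_eq {X K : Type*} [NormedField K] {p q : X → ℤ} (hq : Surjective q)
    {s t : K} (hs : 1 < ‖s‖) (ht : 1 < ‖t‖) (h : ∀ x, s ^ p x = t ^ q x) : ‖s‖ ≤ ‖t‖ := by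
  obtain ⟨x, hx⟩ := hq 1
  have hts : ‖t‖ = ‖s‖ ^ p x := by rw [← norm_zpow, h, hx, zpow_one]
  rw [hts] at ht ⊢
  simpa using zpow_le_zpow_right₀ hs.le ((one_lt_zpow_iff_right₀ hs).1 ht)

theorem eq_of_natCast_zpow_eq {X : Type*} {p q : X → ℤ} (hp : Surjective p) (hq : Surjective q)
    {a b : ℕ} (ha : 2 ≤ a) (hb : 2 ≤ b) (h : ∀ x, (a : ℂ) ^ p x = (b : ℂ) ^ q x) : a = b := by
  have hnorm {c : ℕ} (hc : 2 ≤ c) : 1 < ‖(c : ℂ)‖ := by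
    rw [Complex.norm_natCast]
    exact_mod_cast hc
  have := (norm_le_of_zpow_eq hq (hnorm ha) (hnorm hb) h).antisymm
    (norm_le_of_zpow_eq hp (hnorm hb) (hnorm ha) fun x => (h x).symm)
  rwa [Complex.norm_natCast, Complex.norm_natCast, Nat.cast_inj] at this

def zpowChar {X K : Type*} [Group X] [DivisionRing K] (π : X →* Multiplicative ℤ) (t : Kˣ) :
    X →* K :=
  (Units.coeHom K).comp ((zpowersHom Kˣ t).comp π)

theorem zpowChar_apply {X K : Type*} [Group X] [DivisionRing K] (π : X →* Multiplicative ℤ)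
    (t : Kˣ) (x : X) : zpowChar π t x = (t : K) ^ (π x).toAdd := by
  simp [zpowChar, Units.val_zpow_eq_zpow_val]

/-- A finitely generated rigid group is FAb. -/
theorem rigid_isFAb (Γ : Type*) [Group Γ] (hfg : Group.FG Γ)
    (hrigid : IsRigid Γ) : IsFAb Γ := by
  intro Λ hΛ
  by_contra hinf
  have := not_finite_iff_infinite.1 hinf
  obtain ⟨N, _, _, π, hπ⟩ := Λ.exists_normal_finiteIndex_surjective_int
  have : Fintype (Γ ⧸ N) := Fintype.ofFinite _
  let t (u : ℕ) : ℂˣ := Units.mk0 (u + 2 : ℕ) (Nat.cast_ne_zero.2 (by omega))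
  choose m hm σ hσ hweight hweights using
    fun u => exists_irreducible_weightsOn_induced N (zpowChar π (t u))
  obtain ⟨u, v, huv, heq⟩ := (hrigid.finite_weightsOn N _).exists_lt_map_eq_of_forall_mem
    (f := fun u => weightsOn (σ u) N) fun u => Set.mem_ofPred.2 ⟨m u, hm u, σ u, hσ u, rfl⟩
  obtain ⟨i, hi⟩ := hweight u
  obtain ⟨j, hj⟩ := hweights v (heq ▸ hi)
  have hsurj (k : Γ ⧸ N) : Surjective fun x => (π (cosetConj N k x)).toAdd :=
    Multiplicative.toAdd.surjective.comp (hπ.comp (cosetConj N k).surjective)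
  have huv' := eq_of_natCast_zpow_eq (hsurj i) (hsurj j) (by omega : 2 ≤ u + 2)
    (by omega : 2 ≤ v + 2) fun x => by simpa [zpowChar_apply, t] using (congrFun hj x).symm
  omega
end

section
/- Let Γ be a finitely generated group and Λ a finite-index subgroup of Γ. Then Λ is rigid if and only if Γ is rigid. -/
open Module Matrix Representation

universe u

namespace Subrepresentation

variable {k G H V : Type*} [Field k] [Monoid G] [Monoid H] [AddCommGroup V] [Module k V]
  {ρ : Representation k G V} (U : Subrepresentation ρ)

def quotient : Representation k G (V ⧸ U.toSubmodule) :=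
  ρ.quotient U.toSubmodule fun g _ hv => U.apply_mem_toSubmodule g hv

def mkQ : ρ.IntertwiningMap U.quotient where
  toLinearMap := U.toSubmodule.mkQ
  isIntertwining' _ := rfl

def comp (φ : H →* G) : Subrepresentation (ρ.comp φ) where
  toSubmodule := U.toSubmodule
  apply_mem_toSubmodule h _ hv := U.apply_mem_toSubmodule (φ h) hv

end Subrepresentation

namespace Representation

section Monoid

variable {k G H V W X : Type*} [Field k] [Monoid G] [Monoid H]
  [AddCommGroup V] [Module k V] [AddCommGroup W] [Module k W] [AddCommGroup X] [Module k X]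

def Embeds (σ : Representation k G W) (ρ : Representation k G V) : Prop :=
  ∃ f : σ.IntertwiningMap ρ, Function.Injective f

lemma Equiv.embeds {σ : Representation k G W} {ρ : Representation k G V} (e : σ.Equiv ρ) :
    Embeds σ ρ :=
  ⟨e.toIntertwiningMap, e.injective⟩

lemma Embeds.trans {σ : Representation k G W} {ρ : Representation k G V}
    {τ : Representation k G X} (h₁ : Embeds σ ρ) (h₂ : Embeds ρ τ) : Embeds σ τ := by
  obtain ⟨f, hf⟩ := h₁
  obtain ⟨g, hg⟩ := h₂
  exact ⟨g.comp f, hg.comp hf⟩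

lemma Embeds.comp {σ : Representation k G W} {ρ : Representation k G V} (h : Embeds σ ρ)
    (φ : H →* G) : Embeds (σ.comp φ) (ρ.comp φ) := by
  obtain ⟨f, hf⟩ := h
  exact ⟨⟨f.toLinearMap, fun h => f.isIntertwining' (φ h)⟩, hf⟩

lemma IsIrreducible.nontrivial {ρ : Representation k G V} (hρ : ρ.IsIrreducible) :
    Nontrivial V := by
  by_contra h
  rw [not_nontrivial_iff_subsingleton] at h
  exact bot_ne_top (Subrepresentation.toSubmodule_injective (Subsingleton.elim _ _) :
    (⊥ : Subrepresentation ρ) = ⊤)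

lemma IsIrreducible.one_le {m : ℕ} {τ : Representation k G (Fin m → k)}
    (hτ : τ.IsIrreducible) : 1 ≤ m := by
  have := hτ.nontrivial
  have h := Module.finrank_pos (R := k) (M := Fin m → k)
  rwa [Module.finrank_fin_fun] at h

lemma Embeds.nontrivial {σ : Representation k G W} {ρ : Representation k G V}
    (hσ : σ.IsIrreducible) (h : Embeds σ ρ) : Nontrivial V := by
  obtain ⟨f, hf⟩ := h
  have := hσ.nontrivial
  exact hf.nontrivial

lemma Embeds.nonempty_equiv {σ : Representation k G W} {ρ : Representation k G V}
    (hσ : σ.IsIrreducible) (hρ : ρ.IsIrreducible) (h : Embeds σ ρ) : Nonempty (σ.Equiv ρ) := by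
  obtain ⟨f, hf⟩ := h
  have := hσ.nontrivial
  have hf0 : f ≠ 0 := fun h0 => by
    obtain ⟨x, hx⟩ := exists_ne (0 : W)
    exact hx (hf (by simp [h0]))
  exact ⟨f.ofBijective ⟨hf, (IsIrreducible.surjective_or_eq_zero f).resolve_right hf0⟩⟩

lemma Embeds.subrepresentation_or_quotient {σ : Representation k G W}
    {ρ : Representation k G V} (hσ : σ.IsIrreducible) (h : Embeds σ ρ)
    (U : Subrepresentation ρ) : Embeds σ U.toRepresentation ∨ Embeds σ U.quotient := by
  obtain ⟨f, hf⟩ := h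
  rcases IsIrreducible.injective_or_eq_zero (U.mkQ.comp f) with hinj | hzero
  · exact Or.inr ⟨_, hinj⟩
  · have hmem : ∀ w, f w ∈ U.toSubmodule := fun w =>
      (Submodule.Quotient.mk_eq_zero _).mp congr($hzero w)
    refine Or.inl ⟨⟨f.toLinearMap.codRestrict _ hmem,
      fun g => LinearMap.ext fun w => Subtype.ext (IntertwiningMap.isIntertwining _ _ f g w)⟩,
      fun x y hxy => hf (congr_arg Subtype.val hxy)⟩

lemma Equiv.isIrreducible {ρ : Representation k G V} {σ : Representation k G W}
    (e : ρ.Equiv σ) (hρ : ρ.IsIrreducible) : σ.IsIrreducible := by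
  rw [irreducible_iff_isSimpleModule_asModule] at hρ ⊢
  exact IsSimpleModule.congr (LinearEquiv.ofLinearMap
    (IntertwiningMap.equivLinearMapAsModule _ _ e.symm.toIntertwiningMap)
    (IntertwiningMap.equivLinearMapAsModule _ _ e.toIntertwiningMap)
    (LinearMap.ext e.symm_apply_apply) (LinearMap.ext e.apply_symm_apply))

lemma exists_equiv_fin (ρ : Representation k G V) [FiniteDimensional k V] :
    ∃ τ : Representation k G (Fin (finrank k V) → k), Nonempty (ρ.Equiv τ) := by
  let e := (Module.finBasis k V).equivFun
  exact ⟨e.conjRingEquiv.toMonoidHom.comp ρ, ⟨Equiv.mk e fun g => by ext; simp⟩⟩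

theorem induction_on_finiteDimensional
    {motive : ∀ {V : Type u} [AddCommGroup V] [Module k V] [FiniteDimensional k V],
      Representation k G V → Prop}
    (subsingleton : ∀ {V : Type u} [AddCommGroup V] [Module k V] [FiniteDimensional k V]
      (ρ : Representation k G V), Subsingleton V → motive ρ)
    (irreducible : ∀ {V : Type u} [AddCommGroup V] [Module k V] [FiniteDimensional k V]
      (ρ : Representation k G V), ρ.IsIrreducible → motive ρ)
    (extension : ∀ {V : Type u} [AddCommGroup V] [Module k V] [FiniteDimensional k V]
      (ρ : Representation k G V) (U : Subrepresentation ρ), U ≠ ⊥ → U ≠ ⊤ →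
        motive U.toRepresentation → motive U.quotient → motive ρ)
    {V : Type u} [AddCommGroup V] [Module k V] [FiniteDimensional k V]
    (ρ : Representation k G V) : motive ρ := by
  induction hn : finrank k V using Nat.strong_induction_on generalizing V with
  | _ n ih =>
  by_cases hV : Subsingleton V
  · exact subsingleton ρ hV
  by_cases hρ : ρ.IsIrreducible
  · exact irreducible ρ hρ
  have : Nontrivial V := not_subsingleton_iff_nontrivial.mp hV
  have : Nontrivial (Subrepresentation ρ) :=
    ⟨⊥, ⊤, fun h => bot_ne_top (α := Submodule k V) congr(Subrepresentation.toSubmodule $h)⟩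
  obtain ⟨U, hU_bot, hU_top⟩ : ∃ U : Subrepresentation ρ, U ≠ ⊥ ∧ U ≠ ⊤ := by
    by_contra! h
    exact hρ { eq_bot_or_eq_top := fun U => or_iff_not_imp_left.mpr (h U) }
  have hU_bot' : U.toSubmodule ≠ ⊥ := fun h => hU_bot (Subrepresentation.toSubmodule_injective h)
  have hU_top' : U.toSubmodule ≠ ⊤ := fun h => hU_top (Subrepresentation.toSubmodule_injective h)
  have hU_pos : 0 < finrank k U.toSubmodule :=
    Nat.pos_of_ne_zero fun h => hU_bot' (Submodule.finrank_eq_zero.mp h)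
  have hsum := Submodule.finrank_quotient_add_finrank U.toSubmodule
  exact extension ρ U hU_bot hU_top
    (ih _ (hn ▸ Submodule.finrank_lt hU_top') _ rfl) (ih _ (by omega) _ rfl)

theorem exists_isIrreducible_embeds_comp {V : Type u} [AddCommGroup V] [Module k V]
    [FiniteDimensional k V] (ρ : Representation k G V) (φ : H →* G)
    {σ : Representation k H W} (hσ : σ.IsIrreducible) (h : Embeds σ (ρ.comp φ)) :
    ∃ m ≤ finrank k V, ∃ τ : Representation k G (Fin m → k),
      τ.IsIrreducible ∧ Embeds σ (τ.comp φ) := by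
  refine induction_on_finiteDimensional (motive := fun {V} _ _ _ ρ => Embeds σ (ρ.comp φ) →
      ∃ m ≤ finrank k V, ∃ τ : Representation k G (Fin m → k),
        τ.IsIrreducible ∧ Embeds σ (τ.comp φ)) ?_ ?_ ?_ ρ h
  · intro V _ _ _ ρ hV h
    exact absurd (h.nontrivial hσ) (not_nontrivial_iff_subsingleton.mpr hV)
  · intro V _ _ _ ρ hρ h
    obtain ⟨τ, ⟨e⟩⟩ := exists_equiv_fin ρ
    exact ⟨_, le_rfl, τ, e.isIrreducible hρ, h.trans (e.embeds.comp φ)⟩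
  · intro V _ _ _ ρ U _ _ ih_sub ih_quot h
    rcases h.subrepresentation_or_quotient hσ (U.comp φ) with h | h
    · obtain ⟨m, hm, τ, hτ, hστ⟩ := ih_sub h
      exact ⟨m, hm.trans (Submodule.finrank_le _), τ, hτ, hστ⟩
    · obtain ⟨m, hm, τ, hτ, hστ⟩ := ih_quot h
      exact ⟨m, hm.trans (Submodule.finrank_quotient_le _), τ, hτ, hστ⟩

theorem exists_surjective_isIrreducible {V : Type u} [AddCommGroup V] [Module k V]
    [FiniteDimensional k V] [Nontrivial V] (ρ : Representation k G V) :
    ∃ m ≤ finrank k V, ∃ τ : Representation k G (Fin m → k),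
      τ.IsIrreducible ∧ ∃ f : ρ.IntertwiningMap τ, Function.Surjective f := by
  refine induction_on_finiteDimensional (motive := fun {V} _ _ _ ρ => Nontrivial V →
      ∃ m ≤ finrank k V, ∃ τ : Representation k G (Fin m → k),
        τ.IsIrreducible ∧ ∃ f : ρ.IntertwiningMap τ, Function.Surjective f) ?_ ?_ ?_ ρ ‹_›
  · intro V _ _ _ ρ hV hV'
    exact absurd hV' (not_nontrivial_iff_subsingleton.mpr hV)
  · intro V _ _ _ ρ hρ _
    obtain ⟨τ, ⟨e⟩⟩ := exists_equiv_fin ρ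
    exact ⟨_, le_rfl, τ, e.isIrreducible hρ, e.toIntertwiningMap, e.surjective⟩
  · intro V _ _ _ ρ U _ hU_top _ ih_quot _
    have : Nontrivial (V ⧸ U.toSubmodule) := Submodule.Quotient.nontrivial_iff.mpr
      fun h => hU_top (Subrepresentation.toSubmodule_injective h)
    obtain ⟨m, hm, τ, hτ, f, hf⟩ := ih_quot this
    exact ⟨m, hm.trans (Submodule.finrank_quotient_le _), τ, hτ, f.comp U.mkQ,
      hf.comp (Submodule.mkQ_surjective _)⟩

/-- Frobenius reciprocity: `v ↦ (x ↦ f (ρ x v))` is a nonzero, hence injective, intertwining map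
into the coinduced representation. -/
theorem embeds_coind_of_ne_zero (φ : H →* G) {ρ : Representation k G V}
    (hρ : ρ.IsIrreducible) {σ : Representation k H W} (f : IntertwiningMap (ρ.comp φ) σ)
    (hf : f ≠ 0) : Embeds ρ (coind φ σ) := by
  let Φ : ρ.IntertwiningMap (coind φ σ) :=
    { toLinearMap := LinearMap.codRestrict _ (LinearMap.pi fun x => f.toLinearMap ∘ₗ ρ x)
        fun v h x => by simpa using IntertwiningMap.isIntertwining _ _ f h (ρ x v)
      isIntertwining' := fun g => by
        ext v x
        change f (ρ x (ρ g v)) = f (ρ (x * g) v)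
        rw [map_mul, Module.End.mul_apply] }
  refine ⟨Φ, (IsIrreducible.injective_or_eq_zero Φ).resolve_right fun hΦ => hf ?_⟩
  ext v
  simpa using (congr(($hΦ v).1 1) : f (ρ 1 v) = 0)

end Monoid

section Subgroup

variable {k Γ W : Type*} [Field k] [Group Γ] [AddCommGroup W] [Module k W]
  (Λ : Subgroup Γ) (σ : Representation k Λ W)

theorem embeds_comp_subtype_coind : Embeds σ ((coind Λ.subtype σ).comp Λ.subtype) := by
  classical
  let extend : W →ₗ[k] Γ → W := LinearMap.pi fun x => if h : x ∈ Λ then σ ⟨x, h⟩ else 0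
  have hextend : ∀ w, extend w ∈ coindV Λ.subtype σ := fun w l x => by
    by_cases hx : x ∈ Λ
    · simp [extend, hx, mul_mem l.2 hx, ← Module.End.mul_apply, ← map_mul]; rfl
    · have : ↑l * x ∉ Λ := fun h => hx (by simpa using mul_mem (inv_mem l.2) h)
      simp [extend, hx, this]
  refine ⟨⟨extend.codRestrict _ hextend, fun l => ?_⟩, fun w₁ w₂ h => ?_⟩
  · ext w x
    change extend (σ l w) x = extend w (x * l)
    by_cases hx : x ∈ Λ
    · simp [extend, hx, mul_mem hx l.2, ← Module.End.mul_apply, ← map_mul]; rfl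
    · have : x * l ∉ Λ := fun h => hx (by simpa using mul_mem h (inv_mem l.2))
      simp [extend, hx, this]
  · have h1 : extend w₁ 1 = extend w₂ 1 := congr(($h).1 1)
    simpa [extend, one_mem, show (⟨1, one_mem Λ⟩ : Λ) = 1 from rfl] using h1

theorem injective_funLeft_out_comp_subtype :
    Function.Injective
      (LinearMap.funLeft k W (Quotient.out : Quotient (QuotientGroup.rightRel Λ) → Γ) ∘ₗ
        (coindV Λ.subtype σ).subtype) := by
  intro f₁ f₂ h
  ext x
  let l : Λ := ⟨x * (⟦x⟧ : Quotient (QuotientGroup.rightRel Λ)).out⁻¹,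
    QuotientGroup.rightRel_apply.mp (Quotient.mk_out x)⟩
  have hx : x = l * (⟦x⟧ : Quotient (QuotientGroup.rightRel Λ)).out := by simp [l]
  have h₁ := congr_fun h ⟦x⟧
  simp only [LinearMap.coe_comp, Function.comp_apply, LinearMap.funLeft_apply,
    Submodule.coe_subtype] at h₁
  rw [hx]
  exact (f₁.2 l _).trans ((congr_arg (σ l) h₁).trans (f₂.2 l _).symm)

instance [Λ.FiniteIndex] [FiniteDimensional k W] :
    FiniteDimensional k (coindV Λ.subtype σ) :=
  have := Λ.fintypeQuotientOfFiniteIndex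
  .of_injective _ (injective_funLeft_out_comp_subtype Λ σ)

theorem finrank_coindV_le [Λ.FiniteIndex] [FiniteDimensional k W] :
    finrank k (coindV Λ.subtype σ) ≤ Λ.index * finrank k W := by
  have := Λ.fintypeQuotientOfFiniteIndex
  refine (LinearMap.finrank_le_finrank_of_injective
    (injective_funLeft_out_comp_subtype Λ σ)).trans_eq ?_
  simp [Module.finrank_pi_fintype, QuotientGroup.card_quotient_rightRel, Λ.index_eq_card,
    Nat.card_eq_fintype_card]

end Subgroup

end Representation

section Matrix

variable {R G ι : Type*} [CommRing R] [Group G] [Fintype ι] [DecidableEq ι]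

def MonoidHom.toRepresentation (μ : G →* GL ι R) : Representation R G (ι → R) :=
  (Units.coeHom _).comp (GeneralLinearGroup.toLin.toMonoidHom.comp μ)

lemma MonoidHom.toRepresentation_surjective :
    Function.Surjective (MonoidHom.toRepresentation : (G →* GL ι R) → _) := fun τ =>
  ⟨GeneralLinearGroup.toLin.symm.toMonoidHom.comp τ.asGroupHom, by
    ext g : 1
    simp [MonoidHom.toRepresentation, asGroupHom_apply]⟩

end Matrix

section Rigidity

variable {G : Type*} [Group G] {n : ℕ}

lemma isIrreducibleRep_iff (hn : 1 ≤ n) (μ : G →* GL (Fin n) ℂ) :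
    IsIrreducibleRep μ ↔ μ.toRepresentation.IsIrreducible := by
  have : Nonempty (Fin n) := ⟨⟨0, hn⟩⟩
  have : Nontrivial (Subrepresentation μ.toRepresentation) :=
    ⟨⊥, ⊤, fun h => bot_ne_top (α := Submodule ℂ (Fin n → ℂ))
      congr(Subrepresentation.toSubmodule $h)⟩
  refine ⟨fun h => ⟨fun U => ?_⟩, fun h W hW => ?_⟩
  · exact (h U.toSubmodule fun g v hv => U.apply_mem_toSubmodule g hv).imp
      (fun h => Subrepresentation.toSubmodule_injective h)
      (fun h => Subrepresentation.toSubmodule_injective h)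
  · exact (h.eq_bot_or_eq_top ⟨W, fun g v hv => hW g v hv⟩).imp
      (congrArg Subrepresentation.toSubmodule) (congrArg Subrepresentation.toSubmodule)

lemma repEquiv_iff (μ ν : G →* GL (Fin n) ℂ) :
    RepEquiv μ ν ↔ Nonempty (μ.toRepresentation.Equiv ν.toRepresentation) := by
  constructor
  · rintro ⟨M, hM⟩
    refine ⟨Representation.Equiv.mk
      (LinearMap.GeneralLinearGroup.toLinearEquiv (GeneralLinearGroup.toLin M⁻¹)) fun g => ?_⟩
    have : M⁻¹ * μ g = ν g * M⁻¹ := by rw [hM g]; group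
    refine LinearMap.ext fun v => ?_
    change ((M⁻¹ : GL (Fin n) ℂ) : Matrix (Fin n) (Fin n) ℂ) *ᵥ ((μ g : Matrix _ _ ℂ) *ᵥ v) =
      (ν g : Matrix _ _ ℂ) *ᵥ (((M⁻¹ : GL (Fin n) ℂ) : Matrix (Fin n) (Fin n) ℂ) *ᵥ v)
    rw [mulVec_mulVec, mulVec_mulVec, ← GeneralLinearGroup.coe_mul, ← GeneralLinearGroup.coe_mul,
      this]
  · rintro ⟨e⟩
    refine ⟨GeneralLinearGroup.toLin.symm
      (LinearMap.GeneralLinearGroup.ofLinearEquiv e.toLinearEquiv.symm), fun g => ?_⟩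
    apply GeneralLinearGroup.toLin.injective
    refine Units.ext (LinearMap.ext fun v => ?_)
    rw [map_mul, map_mul, map_inv, MulEquiv.apply_symm_apply]
    change μ.toRepresentation g v = e.symm (ν.toRepresentation g (e v))
    exact (e.symm_apply_apply _).symm.trans
      (congrArg e.symm (IntertwiningMap.isIntertwining _ _ e.toIntertwiningMap g v))

def FiniteUpToEquiv (P : (G →* GL (Fin n) ℂ) → Prop) : Prop :=
  ∃ S : Set (G →* GL (Fin n) ℂ), S.Finite ∧ ∀ ρ, P ρ → ∃ σ ∈ S, RepEquiv ρ σ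

namespace FiniteUpToEquiv

lemma of_pairwise {P : (G →* GL (Fin n) ℂ) → Prop}
    (h : ∀ ρ σ, P ρ → P σ → RepEquiv ρ σ) : FiniteUpToEquiv P := by
  by_cases hP : ∃ σ, P σ
  · obtain ⟨σ, hσ⟩ := hP
    exact ⟨{σ}, Set.finite_singleton σ, fun ρ hρ => ⟨σ, rfl, h ρ σ hρ hσ⟩⟩
  · exact ⟨∅, Set.finite_empty, fun ρ hρ => absurd ⟨ρ, hρ⟩ hP⟩

lemma mono {P Q : (G →* GL (Fin n) ℂ) → Prop} (hQ : FiniteUpToEquiv Q)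
    (h : ∀ ρ, P ρ → Q ρ) : FiniteUpToEquiv P := by
  obtain ⟨S, hS, hQS⟩ := hQ
  exact ⟨S, hS, fun ρ hρ => hQS ρ (h ρ hρ)⟩

lemma or {P Q : (G →* GL (Fin n) ℂ) → Prop} (hP : FiniteUpToEquiv P)
    (hQ : FiniteUpToEquiv Q) : FiniteUpToEquiv fun ρ => P ρ ∨ Q ρ := by
  obtain ⟨S, hS, hPS⟩ := hP
  obtain ⟨T, hT, hQT⟩ := hQ
  refine ⟨S ∪ T, hS.union hT, fun ρ hρ => ?_⟩
  rcases hρ with hρ | hρ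
  · obtain ⟨σ, hσ, he⟩ := hPS ρ hρ
    exact ⟨σ, Or.inl hσ, he⟩
  · obtain ⟨σ, hσ, he⟩ := hQT ρ hρ
    exact ⟨σ, Or.inr hσ, he⟩

lemma biUnion {ι : Type*} {I : Set ι} (hI : I.Finite) {Q : ι → (G →* GL (Fin n) ℂ) → Prop}
    (hQ : ∀ i ∈ I, FiniteUpToEquiv (Q i)) {P : (G →* GL (Fin n) ℂ) → Prop}
    (h : ∀ ρ, P ρ → ∃ i ∈ I, Q i ρ) : FiniteUpToEquiv P := by
  choose! S hS hQS using hQ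
  refine ⟨⋃ i ∈ I, S i, hI.biUnion hS, fun ρ hρ => ?_⟩
  obtain ⟨i, hi, hQρ⟩ := h ρ hρ
  obtain ⟨σ, hσ, he⟩ := hQS i hi ρ hQρ
  exact ⟨σ, Set.mem_biUnion hi hσ, he⟩

end FiniteUpToEquiv

theorem finiteUpToEquiv_embeds {V : Type u} [AddCommGroup V] [Module ℂ V]
    [FiniteDimensional ℂ V] (ρ : Representation ℂ G V) (n : ℕ) :
    FiniteUpToEquiv fun μ : G →* GL (Fin n) ℂ =>
      μ.toRepresentation.IsIrreducible ∧ Embeds μ.toRepresentation ρ := by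
  refine induction_on_finiteDimensional (motive := fun ρ => FiniteUpToEquiv fun μ =>
      μ.toRepresentation.IsIrreducible ∧ Embeds μ.toRepresentation ρ) ?_ ?_ ?_ ρ
  · intro V _ _ _ ρ hV
    exact .of_pairwise fun μ _ ⟨hμ, h⟩ _ =>
      absurd (h.nontrivial hμ) (not_nontrivial_iff_subsingleton.mpr hV)
  · intro V _ _ _ ρ hρ
    refine .of_pairwise fun μ ν ⟨hμ, hμρ⟩ ⟨hν, hνρ⟩ => (repEquiv_iff μ ν).mpr ?_
    obtain ⟨e₁⟩ := hμρ.nonempty_equiv hμ hρ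
    obtain ⟨e₂⟩ := hνρ.nonempty_equiv hν hρ
    exact ⟨e₁.trans e₂.symm⟩
  · intro V _ _ _ ρ U _ _ ih_sub ih_quot
    exact (ih_sub.or ih_quot).mono fun μ ⟨hμ, h⟩ =>
      (h.subrepresentation_or_quotient hμ U).imp (⟨hμ, ·⟩) (⟨hμ, ·⟩)

theorem IsRigid.finiteUpToEquiv {H : Type*} [Group H] (hH : IsRigid H) (N : ℕ)
    (Q : ∀ {m : ℕ}, (H →* GL (Fin m) ℂ) → (G →* GL (Fin n) ℂ) → Prop)
    (hQ : ∀ {m} (μ : H →* GL (Fin m) ℂ), FiniteUpToEquiv (Q μ))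
    (hQ_equiv : ∀ {m} {μ μ' : H →* GL (Fin m) ℂ} {ρ}, RepEquiv μ μ' → Q μ ρ → Q μ' ρ)
    {P : (G →* GL (Fin n) ℂ) → Prop}
    (hP : ∀ ρ, P ρ → ∃ m ∈ Set.Icc 1 N, ∃ μ : H →* GL (Fin m) ℂ, IsIrreducibleRep μ ∧ Q μ ρ) :
    FiniteUpToEquiv P := by
  refine .biUnion (Set.finite_Icc 1 N) (fun m hm => ?_) hP
  obtain ⟨S, hS, hIrrS⟩ := hH m hm.1
  refine .biUnion hS (fun μ _ => hQ μ) ?_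
  rintro ρ ⟨μ₀, hμ₀, hQρ⟩
  obtain ⟨μ, hμ, hμ₀μ⟩ := hIrrS μ₀ hμ₀
  exact ⟨μ, hμ, hQ_equiv hμ₀μ hQρ⟩

end Rigidity

section FiniteIndex

variable {Γ : Type*} [Group Γ]

theorem IsRigid.subgroup (hΓ : IsRigid Γ) (Λ : Subgroup Γ) [Λ.FiniteIndex] : IsRigid Λ := by
  intro n hn
  refine hΓ.finiteUpToEquiv (Λ.index * n)
    (fun μ σ => σ.toRepresentation.IsIrreducible ∧
      Embeds σ.toRepresentation (μ.toRepresentation.comp Λ.subtype))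
    (fun μ => finiteUpToEquiv_embeds _ n)
    (fun hμμ' ⟨hσ, h⟩ => ⟨hσ, h.trans (((repEquiv_iff _ _).mp hμμ').some.embeds.comp Λ.subtype)⟩)
    fun σ hσ => ?_
  rw [isIrreducibleRep_iff hn] at hσ
  obtain ⟨m, hm, τ, hτ, hστ⟩ := exists_isIrreducible_embeds_comp _ Λ.subtype hσ
    (embeds_comp_subtype_coind Λ σ.toRepresentation)
  obtain ⟨μ, rfl⟩ := MonoidHom.toRepresentation_surjective τ
  refine ⟨m, ⟨hτ.one_le, hm.trans ?_⟩, μ, (isIrreducibleRep_iff hτ.one_le μ).mpr hτ, hσ, hστ⟩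
  simpa using finrank_coindV_le Λ σ.toRepresentation

theorem IsRigid.of_subgroup (Λ : Subgroup Γ) [Λ.FiniteIndex] (hΛ : IsRigid Λ) : IsRigid Γ := by
  intro n hn
  refine hΛ.finiteUpToEquiv n
    (fun μ ρ => ρ.toRepresentation.IsIrreducible ∧
      ∃ f : IntertwiningMap (ρ.toRepresentation.comp Λ.subtype) μ.toRepresentation, f ≠ 0)
    (fun μ => (finiteUpToEquiv_embeds (coind Λ.subtype μ.toRepresentation) n).mono
      fun ρ ⟨hρ, f, hf⟩ => ⟨hρ, embeds_coind_of_ne_zero _ hρ f hf⟩)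
    (fun hμμ' ⟨hρ, f, hf⟩ => ?_)
    fun ρ hρ => ?_
  · obtain ⟨e⟩ := (repEquiv_iff _ _).mp hμμ'
    exact ⟨hρ, e.toIntertwiningMap.comp f, fun h => hf (IntertwiningMap.ext
      (LinearMap.ext fun v => e.injective (by simpa using congr($h v))))⟩
  rw [isIrreducibleRep_iff hn] at hρ
  have := hρ.nontrivial
  obtain ⟨m, hm, τ, hτ, f, hf⟩ :=
    exists_surjective_isIrreducible (ρ.toRepresentation.comp Λ.subtype)
  obtain ⟨μ, rfl⟩ := MonoidHom.toRepresentation_surjective τ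
  have := hτ.nontrivial
  refine ⟨m, ⟨hτ.one_le, by simpa using hm⟩, μ, (isIrreducibleRep_iff hτ.one_le μ).mpr hτ, hρ, f,
    fun h => ?_⟩
  obtain ⟨v, hv⟩ := exists_ne (0 : Fin m → ℂ)
  obtain ⟨w, rfl⟩ := hf v
  exact hv (by simp [h])

end FiniteIndex

theorem isRigid_iff_of_finiteIndex_general (Γ : Type*) [Group Γ]
    (Λ : Subgroup Γ) (hΛ : Λ.FiniteIndex) : IsRigid Λ ↔ IsRigid Γ :=
  ⟨IsRigid.of_subgroup Λ, (IsRigid.subgroup · Λ)⟩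

/-- For a finitely generated group `Γ` and a finite-index subgroup `Λ`,
`Λ` is rigid if and only if `Γ` is rigid. -/
theorem isRigid_iff_of_finiteIndex (Γ : Type*) [Group Γ] (hfg : Group.FG Γ)
    (Λ : Subgroup Γ) (hΛ : Λ.FiniteIndex) : IsRigid Λ ↔ IsRigid Γ :=
  isRigid_iff_of_finiteIndex_general Γ Λ hΛ
end

section
/- Let L₁ and L₂ be finitely generated groups, D a finitely presented group, and ρ₁ : L₁ → D, ρ₂ : L₂ → D surjective homomorphisms. Then the fibre product Γ = L₁ ×_D L₂ is finitely generated. -/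
/-- The fibre product `L₁ ×_D L₂` of two surjective homomorphisms onto `D`,
as a subgroup of `L₁ × L₂`. -/
def fiberProduct {L₁ L₂ D : Type*} [Group L₁] [Group L₂] [Group D]
    (ρ₁ : L₁ →* D) (ρ₂ : L₂ →* D) : Subgroup (L₁ × L₂) where
  carrier := {p : L₁ × L₂ | ρ₁ p.1 = ρ₂ p.2}
  one_mem' := by simp
  mul_mem' := by
    intro a b ha hb
    simp only [Set.mem_setOf_eq, Prod.fst_mul, Prod.snd_mul, map_mul] at *
    rw [ha, hb]
  inv_mem' := by
    intro a ha
    simp only [Set.mem_setOf_eq, Prod.fst_inv, Prod.snd_inv, map_inv] at *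
    rw [ha]

/-- A group is finitely presented if it is a quotient of a finitely generated
free group by the normal closure of finitely many elements. -/
def IsFinitelyPresented (D : Type*) [Group D] : Prop :=
  ∃ (m : ℕ) (S : Finset (FreeGroup (Fin m))) (φ : FreeGroup (Fin m) →* D),
    Function.Surjective φ ∧
      φ.ker = Subgroup.normalClosure (S : Set (FreeGroup (Fin m)))

/-!
Finite presentability of `D` enters only through `ker ρ₂` being the normal closure of a finite
set: if `φ : F → D` is a finite presentation and `ψ : F → L₂` lifts it through `ρ₂`, then
`ker ρ₂` is normally generated by the images under `ψ` of the relators together with the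
elements `ψ(w)⁻¹ * z`, for `z` in a finite generating set of `L₂` and `φ w = ρ₂ z`.

Now `Γ` is generated by lifts `(a, a')` of generators `a` of `L₁`, lifts `(b', b)` of
generators `b` of `L₂`, and the elements `(1, k)` for `k` normally generating `ker ρ₂`. The
subgroup `H` they generate projects onto `L₂`, so `{k | (1, k) ∈ H}` is normal in `L₂` and
contains `ker ρ₂`; as `H` also projects onto `L₁`, every `(x, y) ∈ Γ` is `h * (1, h.2⁻¹ * y)`
for some `h ∈ H` with `h.1 = x`.
-/

open Function Subgroup

theorem IsFinitelyPresented.isFinitelyPresented {D : Type*} [Group D]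
    (hD : IsFinitelyPresented D) : Group.IsFinitelyPresented D := by
  obtain ⟨m, S, φ, hφ, hker⟩ := hD
  exact ⟨m, φ, hφ, S, S.finite_toSet, hker.symm⟩

theorem Subgroup.map_closure_eq_top {G M : Type*} [Group G] [Group M] {f : G →* M}
    {S : Set G} {T : Set M} (hT : closure T = ⊤) (hTS : T ⊆ f '' S) :
    (closure S).map f = ⊤ := by
  rw [MonoidHom.map_closure, eq_top_iff, ← hT]
  exact closure_mono hTS

theorem MonoidHom.ker_le_of_range_sup_eq_top {F L D : Type*} [Group F] [Group L] [Group D]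
    (ψ : F →* L) (ρ : L →* D) {N : Subgroup L} [N.Normal] (hNρ : N ≤ ρ.ker)
    (hψN : (ρ.comp ψ).ker.map ψ ≤ N) (htop : ψ.range ⊔ N = ⊤) : ρ.ker ≤ N := by
  intro k hk
  obtain ⟨_, ⟨v, rfl⟩, n, hn, rfl⟩ := mem_sup_of_normal_right.mp (htop ▸ mem_top k)
  have hv : v ∈ (ρ.comp ψ).ker := by
    simpa [MonoidHom.mem_ker, MonoidHom.mem_ker.mp (hNρ hn)] using hk
  exact N.mul_mem (hψN ⟨v, hv, rfl⟩) hn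

theorem Group.IsFinitelyPresented.ker_isFinitelyNormallyGenerated {L D : Type*} [Group L]
    [Group D] [hD : Group.IsFinitelyPresented D] (hL : Group.FG L) {ρ : L →* D}
    (hρ : Surjective ρ) : ρ.ker.IsFinitelyNormallyGenerated := by
  obtain ⟨m, φ, hφ, S, hSfin, hS⟩ := hD
  obtain ⟨Z, hZ, hZfin⟩ := Group.fg_iff.mp hL
  let ψ : FreeGroup (Fin m) →* L := FreeGroup.lift fun i ↦ surjInv hρ (φ (.of i))
  have hρψ : ρ.comp ψ = φ := FreeGroup.ext_hom _ _ fun i ↦ by simp [ψ, surjInv_eq hρ]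
  let w : L → FreeGroup (Fin m) := fun z ↦ surjInv hφ (ρ z)
  let T : Set L := ψ '' S ∪ (fun z ↦ (ψ (w z))⁻¹ * z) '' Z
  have hTρ : normalClosure T ≤ ρ.ker := by
    refine normalClosure_le_normal ?_
    rintro _ (⟨s, hs, rfl⟩ | ⟨z, -, rfl⟩)
    · rw [SetLike.mem_coe, ← mem_comap, MonoidHom.comap_ker, hρψ, ← hS]
      exact subset_normalClosure hs
    · rw [SetLike.mem_coe, MonoidHom.mem_ker, map_mul, map_inv, ← ρ.comp_apply, hρψ,
        surjInv_eq hφ, inv_mul_cancel]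
  refine ⟨T, (hSfin.image _).union (hZfin.image _), le_antisymm hTρ ?_⟩
  refine ψ.ker_le_of_range_sup_eq_top ρ hTρ ?_ ?_
  · rw [hρψ, ← hS]
    exact (map_normalClosure_le S ψ).trans (normalClosure_mono Set.subset_union_left)
  · rw [eq_top_iff, ← hZ, closure_le]
    intro z hz
    rw [← mul_inv_cancel_left (ψ (w z)) z]
    exact mul_mem_sup ⟨w z, rfl⟩
      (subset_normalClosure (Set.subset_union_right ⟨z, hz, rfl⟩))

section FiberProduct

variable {L₁ L₂ D : Type*} [Group L₁] [Group L₂] [Group D] {ρ₁ : L₁ →* D} {ρ₂ : L₂ →* D}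

@[simp]
theorem mem_fiberProduct {p : L₁ × L₂} : p ∈ fiberProduct ρ₁ ρ₂ ↔ ρ₁ p.1 = ρ₂ p.2 := Iff.rfl

theorem Subgroup.normal_comap_inr {H : Subgroup (L₁ × L₂)}
    (h : H.map (MonoidHom.snd L₁ L₂) = ⊤) : (H.comap (MonoidHom.inr L₁ L₂)).Normal := by
  refine ⟨fun k hk g ↦ ?_⟩
  obtain ⟨p, hp, rfl⟩ := mem_map.mp (h ▸ mem_top g)
  have hconj : p * (1, k) * p⁻¹ = (1, p.2 * k * p.2⁻¹) := by ext <;> simp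
  simpa [hconj] using H.mul_mem (H.mul_mem hp hk) (H.inv_mem hp)

theorem fiberProduct_le_of_map_fst_eq_top {H : Subgroup (L₁ × L₂)} (hH : H ≤ fiberProduct ρ₁ ρ₂)
    (hfst : H.map (MonoidHom.fst L₁ L₂) = ⊤) (hker : ρ₂.ker ≤ H.comap (MonoidHom.inr L₁ L₂)) :
    fiberProduct ρ₁ ρ₂ ≤ H := by
  rintro ⟨x, y⟩ hxy
  obtain ⟨h, hh, rfl⟩ := mem_map.mp (hfst ▸ mem_top x)
  have hk : h.2⁻¹ * y ∈ ρ₂.ker := by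
    simp [MonoidHom.mem_ker, ← mem_fiberProduct.mp (hH hh), ← mem_fiberProduct.mp hxy]
  have hprod : h * (1, h.2⁻¹ * y) = (h.1, y) := by ext <;> simp
  simpa [hprod] using H.mul_mem hh (hker hk)

theorem fg_fiberProduct_of_isFinitelyNormallyGenerated_ker (hfg₁ : Group.FG L₁)
    (hfg₂ : Group.FG L₂) (hρ₁ : Surjective ρ₁) (hρ₂ : Surjective ρ₂)
    (hker : ρ₂.ker.IsFinitelyNormallyGenerated) : Group.FG (fiberProduct ρ₁ ρ₂) := by
  obtain ⟨S₁, hS₁, hS₁fin⟩ := Group.fg_iff.mp hfg₁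
  obtain ⟨S₂, hS₂, hS₂fin⟩ := Group.fg_iff.mp hfg₂
  obtain ⟨T, hTfin, hT⟩ := hker
  let lift₁ : L₁ → L₁ × L₂ := fun a ↦ (a, surjInv hρ₂ (ρ₁ a))
  let lift₂ : L₂ → L₁ × L₂ := fun b ↦ (surjInv hρ₁ (ρ₂ b), b)
  let gens : Set (L₁ × L₂) := lift₁ '' S₁ ∪ lift₂ '' S₂ ∪ MonoidHom.inr L₁ L₂ '' T
  have hgens : closure gens ≤ fiberProduct ρ₁ ρ₂ := by
    rw [closure_le]
    rintro _ ((⟨a, -, rfl⟩ | ⟨b, -, rfl⟩) | ⟨k, hk, rfl⟩)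
    · exact (surjInv_eq hρ₂ _).symm
    · exact surjInv_eq hρ₁ _
    · simpa [eq_comm] using hT.le (subset_normalClosure hk)
  have hsnd : (closure gens).map (MonoidHom.snd L₁ L₂) = ⊤ :=
    map_closure_eq_top hS₂ fun b hb ↦ ⟨lift₂ b, .inl (.inr ⟨b, hb, rfl⟩), rfl⟩
  have := normal_comap_inr hsnd
  rw [Group.fg_iff_subgroup_fg, Subgroup.fg_iff]
  refine ⟨gens, le_antisymm hgens (fiberProduct_le_of_map_fst_eq_top hgens ?_ ?_),
    ((hS₁fin.image _).union (hS₂fin.image _)).union (hTfin.image _)⟩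
  · exact map_closure_eq_top hS₁ fun a ha ↦ ⟨lift₁ a, .inl (.inl ⟨a, ha, rfl⟩), rfl⟩
  · rw [← hT]
    exact normalClosure_le_normal fun k hk ↦ subset_closure (.inr ⟨k, hk, rfl⟩)

end FiberProduct

/-- The fibre product of two finitely generated groups over a finitely
presented group is finitely generated. -/
theorem fg_fiberProduct {L₁ L₂ D : Type*} [Group L₁] [Group L₂] [Group D]
    (hfg₁ : Group.FG L₁) (hfg₂ : Group.FG L₂) (hD : IsFinitelyPresented D)
    (ρ₁ : L₁ →* D) (ρ₂ : L₂ →* D)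
    (hsurj₁ : Function.Surjective ρ₁) (hsurj₂ : Function.Surjective ρ₂) :
    Group.FG (fiberProduct ρ₁ ρ₂) :=
  have := hD.isFinitelyPresented
  fg_fiberProduct_of_isFinitelyNormallyGenerated_ker hfg₁ hfg₂ hsurj₁ hsurj₂
    (Group.IsFinitelyPresented.ker_isFinitelyNormallyGenerated hfg₂ hsurj₂)
end

section
/- Let L be a group, ρ : L → D a surjective homomorphism with kernel R, and Γ = L ×_D L the fibre product of L with itself over D. Assume that L is FAb and that for every finite-index normal subgroup L₀ of L and every finite-index subgroup R₀ of R that is normal in L, the commutator subgroup [L₀, R₀] has finite index in R₀. Then Γ is FAb. -/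
/-!
It suffices to treat a normal subgroup `Λ` of finite index in `Γ`. Let `p₁, p₂` be the two
projections and `K = Λ ∩ ker p₁`, the elements `(1, r)` of `Λ`. Modulo `K`, `[Λ, Λ]` maps onto
`[p₁Λ, p₁Λ]`, which has finite index in `p₁Λ` because `L` is FAb. Inside `K`, the commutators
`[(a, b), (1, r)] = (1, [b, r])` identify `[Λ, K]` with `[p₂Λ, R₀]`, where `R₀ = p₂K` is a
subgroup of `R`, normal in `L` and of finite index in `R`; so by hypothesis `[Λ, K]`, hence
`[Λ, Λ] ∩ K`, has finite index in `K`. Together, `[Λ, Λ]` has finite index in `Λ`.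
-/

namespace Subgroup

variable {G M : Type*} [Group G] [Group M]

lemma commutator_subgroupOf_self (H : Subgroup G) :
    ⁅H, H⁆.subgroupOf H = _root_.commutator H := by
  rw [← H.map_subtype_commutator]
  exact comap_map_eq_self_of_injective H.subtype_injective _

lemma finite_abelianization_iff (H : Subgroup G) :
    Finite (Abelianization H) ↔ ⁅H, H⁆.relIndex H ≠ 0 := by
  rw [relIndex, commutator_subgroupOf_self, ← finiteIndex_iff, finiteIndex_iff_finite_quotient]
  exact Iff.rfl

lemma finite_abelianization_of_le {H K : Subgroup G} (hHK : H ≤ K) (hfin : H.relIndex K ≠ 0)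
    (h : Finite (Abelianization H)) : Finite (Abelianization K) := by
  rw [finite_abelianization_iff] at h ⊢
  refine ne_zero_of_dvd_ne_zero ?_ (relIndex_dvd_of_le_left K (commutator_mono hHK hHK))
  rw [← relIndex_mul_relIndex _ _ _ (commutator_le_self H) hHK]
  exact mul_ne_zero h hfin

lemma finiteIndex_map_of_surjective {f : G →* M} (hf : Function.Surjective f) (H : Subgroup G)
    [H.FiniteIndex] : (H.map f).FiniteIndex :=
  ⟨ne_zero_of_dvd_ne_zero FiniteIndex.index_ne_zero (H.index_map_dvd hf)⟩

lemma relIndex_map_map_of_injOn {f : G →* M} {H K : Subgroup G} (hHK : H ≤ K)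
    (hf : Set.InjOn f K) : (H.map f).relIndex (K.map f) = H.relIndex K := by
  have hinj : Function.Injective (f.comp K.subtype) := fun a b h => Subtype.ext (hf a.2 b.2 h)
  have := relIndex_map_map_of_injective (H.subgroupOf K) ⊤ hinj
  rwa [← map_map, ← map_map, map_subgroupOf_eq_of_le hHK, ← MonoidHom.range_eq_map,
    range_subtype, relIndex_top_right] at this

theorem finiteIndex_commutator_of_ker {f : G →* M}
    (hrange : ⁅f.range, f.range⁆.relIndex f.range ≠ 0)
    (hker : ⁅(⊤ : Subgroup G), f.ker⁆.relIndex f.ker ≠ 0) :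
    (_root_.commutator G).FiniteIndex := by
  have hsup : (_root_.commutator G ⊔ f.ker).index ≠ 0 := by
    rwa [← comap_map_eq, index_comap, _root_.commutator_def, map_commutator,
      ← MonoidHom.range_eq_map]
  have hinf : (_root_.commutator G).relIndex f.ker ≠ 0 :=
    ne_zero_of_dvd_ne_zero hker (relIndex_dvd_of_le_left _ (commutator_mono le_rfl le_top))
  refine ⟨?_⟩
  rw [← relIndex_mul_index le_sup_left, relIndex_sup_left]
  exact mul_ne_zero hinf hsup

end Subgroup

open Subgroup

theorem isFAb_of_normal {G : Type*} [Group G]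
    (h : ∀ N : Subgroup G, N.Normal → N.FiniteIndex → Finite (Abelianization N)) : IsFAb G :=
  fun Λ _ => finite_abelianization_of_le Λ.normalCore_le FiniteIndex.index_ne_zero
    (h _ Λ.normalCore_normal inferInstance)

namespace fiberProduct

section

variable {L₁ L₂ D : Type*} [Group L₁] [Group L₂] [Group D] (ρ₁ : L₁ →* D) (ρ₂ : L₂ →* D)

def fst : fiberProduct ρ₁ ρ₂ →* L₁ := (MonoidHom.fst L₁ L₂).comp (fiberProduct ρ₁ ρ₂).subtype

def snd : fiberProduct ρ₁ ρ₂ →* L₂ := (MonoidHom.snd L₁ L₂).comp (fiberProduct ρ₁ ρ₂).subtype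

def inr : ρ₂.ker →* fiberProduct ρ₁ ρ₂ :=
  ((MonoidHom.inr L₁ L₂).comp ρ₂.ker.subtype).codRestrict _ fun r =>
    (map_one ρ₁).trans (MonoidHom.mem_ker.mp r.2).symm

end

variable {L D : Type*} [Group L] [Group D] (ρ : L →* D)

def diag : L →* fiberProduct ρ ρ :=
  ((MonoidHom.id L).prod (MonoidHom.id L)).codRestrict _ fun _ => rfl

lemma fst_surjective : Function.Surjective (fst ρ ρ) := fun x => ⟨diag ρ x, rfl⟩

lemma snd_surjective : Function.Surjective (snd ρ ρ) := fun x => ⟨diag ρ x, rfl⟩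

variable {ρ} (Λ : Subgroup (fiberProduct ρ ρ))

/-- The subgroup `{r | (1, r) ∈ Λ}` of `L`. -/
def sndSlice : Subgroup L := ((fst ρ ρ).domRestrict Λ).ker.map ((snd ρ ρ).domRestrict Λ)

lemma sndSlice_le_ker : sndSlice Λ ≤ ρ.ker := by
  rintro _ ⟨k, hk, rfl⟩
  have hρ : ρ (fst ρ ρ k) = ρ (snd ρ ρ k) := k.1.2
  rw [MonoidHom.mem_ker, MonoidHom.domRestrict_apply, ← hρ, show fst ρ ρ k = 1 from hk, map_one]

lemma sndSlice_normal [Λ.Normal] : (sndSlice Λ).Normal := by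
  refine ⟨?_⟩
  rintro _ ⟨k, hk, rfl⟩ x
  let c : Λ := ⟨diag ρ x * k * (diag ρ x)⁻¹, Normal.conj_mem ‹_› _ k.2 _⟩
  refine ⟨c, ?_, rfl⟩
  show x * fst ρ ρ k * x⁻¹ = 1
  rw [show fst ρ ρ k = 1 from hk, mul_one, mul_inv_cancel]

lemma finiteIndex_sndSlice_subgroupOf_ker [Λ.FiniteIndex] :
    ((sndSlice Λ).subgroupOf ρ.ker).FiniteIndex := by
  have : (Λ.comap (inr ρ ρ)).FiniteIndex :=
    ⟨(index_comap Λ (inr ρ ρ)).trans_ne FiniteIndex.index_ne_zero⟩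
  exact finiteIndex_of_le (H := Λ.comap (inr ρ ρ)) fun r hr =>
    ⟨⟨inr ρ ρ r, hr⟩, MonoidHom.mem_ker.mpr rfl, rfl⟩

lemma injOn_snd_ker_fst :
    Set.InjOn ((snd ρ ρ).domRestrict Λ) ((fst ρ ρ).domRestrict Λ).ker := fun _ ha _ hb h =>
  Subtype.ext <| Subtype.ext <|
    Prod.ext ((MonoidHom.mem_ker.mp ha).trans (MonoidHom.mem_ker.mp hb).symm) h

/-- `[(a, b), (1, r)] = (1, [b, r])`, and `p₂` is injective on `ker p₁`. -/
lemma relIndex_commutator_ker_fst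
    (h : ⁅Λ.map (snd ρ ρ), sndSlice Λ⁆.relIndex (sndSlice Λ) ≠ 0) :
    ⁅(⊤ : Subgroup Λ), ((fst ρ ρ).domRestrict Λ).ker⁆.relIndex
      ((fst ρ ρ).domRestrict Λ).ker ≠ 0 := by
  rwa [← relIndex_map_map_of_injOn (commutator_le_right _ _) (injOn_snd_ker_fst Λ),
    map_commutator, ← MonoidHom.range_eq_map, MonoidHom.domRestrict_range]

end fiberProduct

open fiberProduct

theorem isFAb_fiberProduct_general {L D : Type*} [Group L] [Group D]
    (ρ : L →* D)
    (hFAb : IsFAb L)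
    (hcomm : ∀ L₀ : Subgroup L, L₀.Normal → L₀.FiniteIndex →
      ∀ R₀ : Subgroup L, R₀ ≤ ρ.ker → (R₀.subgroupOf ρ.ker).FiniteIndex →
        R₀.Normal → (⁅L₀, R₀⁆.subgroupOf R₀).FiniteIndex) :
    IsFAb (fiberProduct ρ ρ) := by
  refine isFAb_of_normal fun Λ hΛ _ => ?_
  have hrange : ⁅Λ.map (fst ρ ρ), Λ.map (fst ρ ρ)⁆.relIndex (Λ.map (fst ρ ρ)) ≠ 0 :=
    (finite_abelianization_iff _).mp (hFAb _ (finiteIndex_map_of_surjective (fst_surjective ρ) Λ))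
  have hslice := hcomm _ (hΛ.map _ (snd_surjective ρ))
    (finiteIndex_map_of_surjective (snd_surjective ρ) Λ) _ (sndSlice_le_ker Λ)
    (finiteIndex_sndSlice_subgroupOf_ker Λ) (sndSlice_normal Λ)
  have : (commutator Λ).FiniteIndex := finiteIndex_commutator_of_ker
    (by rwa [MonoidHom.domRestrict_range]) (relIndex_commutator_ker_fst Λ hslice.index_ne_zero)
  exact finite_quotient_of_finiteIndex

/-- If `L` is FAb and, for every finite-index normal subgroup `L₀` of `L` and
every finite-index subgroup `R₀` of `R = ker ρ` which is normal in `L`, the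
commutator `[L₀, R₀]` has finite index in `R₀`, then the fibre product
`Γ = L ×_D L` is FAb. -/
theorem isFAb_fiberProduct {L D : Type*} [Group L] [Group D]
    (ρ : L →* D) (hsurj : Function.Surjective ρ)
    (hFAb : IsFAb L)
    (hcomm : ∀ L₀ : Subgroup L, L₀.Normal → L₀.FiniteIndex →
      ∀ R₀ : Subgroup L, R₀ ≤ ρ.ker → (R₀.subgroupOf ρ.ker).FiniteIndex →
        R₀.Normal → (⁅L₀, R₀⁆.subgroupOf R₀).FiniteIndex) :
    IsFAb (fiberProduct ρ ρ) :=
  isFAb_fiberProduct_general ρ hFAb hcomm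
end

section
/- Let D be a perfect group and let 1 → C → E → D → 1 be a central extension of D (i.e., C is a central subgroup of E and E/C ≅ D) such that the abelianization E/[E,E] is finite. Then rk(C) ≤ rk(H₂(D)). -/
open scoped TensorProduct

/-- The rank of a group `G`: `dim_ℚ(A ⊗_ℤ ℚ)` where `A = G/[G,G]` is the
abelianization of `G`.  For an abelian group `G` this is exactly
`dim_ℚ(G ⊗_ℤ ℚ)`. -/
noncomputable def grpRank (G : Type*) [Group G] : Cardinal :=
  Module.rank ℚ (ℚ ⊗[ℤ] (Additive (Abelianization G)))

/-- The rank of the second integral homology `H₂(D; ℤ)` (the Schur multiplier)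
of `D`, given via Hopf's formula: for a presentation `D = F/N` with `F` free,
`H₂(D; ℤ) ≅ (N ⊓ [F,F]) / [F,N]`, realized here as the image of `N ⊓ [F,F]`
in `F/[F,N]` for the canonical presentation `F = FreeGroup D`. -/
noncomputable def schurMultiplierRank (D : Type*) [Group D] : Cardinal :=
  grpRank (Subgroup.map
    (QuotientGroup.mk' ⁅(⊤ : Subgroup (FreeGroup D)), (FreeGroup.lift (id : D → D)).ker⁆)
    ((FreeGroup.lift (id : D → D)).ker ⊓ commutator (FreeGroup D)))

universe u

/-!
For a central extension `1 → C → E → D → 1`, lift the canonical presentation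
`F = FreeGroup D → D` with kernel `N` to `φ : F → E`. Centrality of `C` makes `φ` kill `[F, N]` and
forces `[E, E] = φ [F, F]`, so `φ` maps the Hopf group `(N ⊓ [F, F]) / [F, N]` onto
`C ⊓ [E, E]`; hence `rk (C ⊓ [E, E]) ≤ rk H₂(D)`. Finiteness of `E^{ab}` says that every
element of `C` has a power in `[E, E]`, so `C ⊓ [E, E]` has full rank in `C`.
-/

open scoped commutatorElement

theorem rank_rat_tensor_le_of_exists_nsmul_mem_range {A B : Type u} [AddCommGroup A]
    [AddCommGroup B] (f : A →+ B) (h : ∀ b : B, ∃ n : ℕ, 0 < n ∧ n • b ∈ f.range) :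
    Module.rank ℚ (ℚ ⊗[ℤ] B) ≤ Module.rank ℚ (ℚ ⊗[ℤ] A) := by
  refine LinearMap.rank_le_of_surjective (f.toIntLinearMap.baseChange ℚ) fun x ↦ ?_
  induction x using TensorProduct.induction_on with
  | zero => exact ⟨0, map_zero _⟩
  | tmul q b =>
    obtain ⟨n, hn, a, ha⟩ := h b
    have ha' : f.toIntLinearMap a = n • b := ha
    refine ⟨(n : ℚ)⁻¹ • (q ⊗ₜ[ℤ] a), ?_⟩
    rw [map_smul, LinearMap.baseChange_tmul, ha', TensorProduct.tmul_smul,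
      ← Nat.cast_smul_eq_nsmul ℚ, smul_smul, inv_mul_cancel₀ (by exact_mod_cast hn.ne'),
      one_smul]
  | add x y hx hy =>
    obtain ⟨u, rfl⟩ := hx
    obtain ⟨v, rfl⟩ := hy
    exact ⟨u + v, map_add _ _ _⟩

section GrpRank

variable {G H : Type u} [Group G] [Group H]

theorem grpRank_le_of_exists_pow_mem_range (f : G →* H)
    (h : ∀ x : Abelianization H, ∃ n : ℕ, 0 < n ∧ x ^ n ∈ (Abelianization.map f).range) :
    grpRank H ≤ grpRank G := by
  refine rank_rat_tensor_le_of_exists_nsmul_mem_range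
    (MonoidHom.toAdditive (Abelianization.map f)) fun b ↦ ?_
  obtain ⟨n, hn, g, hg⟩ := h b.toMul
  exact ⟨n, hn, Additive.ofMul g, congrArg Additive.ofMul hg⟩

theorem grpRank_le_of_surjective (f : G →* H) (hf : Function.Surjective f) :
    grpRank H ≤ grpRank G :=
  grpRank_le_of_exists_pow_mem_range f fun x ↦ by
    obtain ⟨h, rfl⟩ := QuotientGroup.mk_surjective x
    obtain ⟨g, rfl⟩ := hf h
    exact ⟨1, one_pos, Abelianization.of g, (Abelianization.map_of f g).trans (pow_one _).symm⟩

theorem grpRank_map_le (f : G →* H) (S : Subgroup G) : grpRank (S.map f) ≤ grpRank S :=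
  grpRank_le_of_surjective (f.subgroupMap S) (f.subgroupMap_surjective S)

theorem grpRank_le_grpRank_inf (A B : Subgroup G) (h : ∀ a ∈ A, ∃ n : ℕ, 0 < n ∧ a ^ n ∈ B) :
    grpRank A ≤ grpRank ↥(A ⊓ B) := by
  refine grpRank_le_of_exists_pow_mem_range (Subgroup.inclusion inf_le_left) fun x ↦ ?_
  induction x using QuotientGroup.induction_on with | H a =>
  obtain ⟨n, hn, hB⟩ := h a a.2
  exact ⟨n, hn, Abelianization.of ⟨a ^ n, pow_mem a.2 n, hB⟩,
    (Abelianization.map_of _ _).trans (map_pow Abelianization.of a n)⟩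

theorem exists_pow_mem_commutator [Finite (Abelianization G)] (g : G) :
    ∃ n : ℕ, 0 < n ∧ g ^ n ∈ commutator G := by
  obtain ⟨n, hn, hpow⟩ := (isOfFinOrder_of_finite (Abelianization.of g)).exists_pow_eq_one
  rw [← map_pow] at hpow
  exact ⟨n, hn, (QuotientGroup.eq_one_iff _).mp hpow⟩

end GrpRank

theorem commutatorElement_mul_mul_of_mem_center {G : Type*} [Group G] (a b : G) {z₁ z₂ : G}
    (hz₁ : z₁ ∈ Subgroup.center G) (hz₂ : z₂ ∈ Subgroup.center G) :
    ⁅a * z₁, b * z₂⁆ = ⁅a, b⁆ := by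
  have c₁ (g : G) : Commute z₁ g := (Subgroup.mem_center_iff.mp hz₁ g).symm
  have c₂ (g : G) : Commute z₂ g := (Subgroup.mem_center_iff.mp hz₂ g).symm
  simp only [commutatorElement_def, mul_inv_rev, mul_assoc]
  rw [(c₁ b).left_comm, (c₁ z₂).left_comm, mul_inv_cancel_left, (c₂ a⁻¹).left_comm,
    mul_inv_cancel_left]

section CentralExtension

variable {F E D : Type u} [Group F] [Group E] [Group D] {π : E →* D}

theorem map_commutator_eq_of_ker_le_center (hπ : π.ker ≤ Subgroup.center E) (φ : F →* E)
    (hφ : Function.Surjective (π.comp φ)) : (commutator F).map φ = commutator E := by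
  refine le_antisymm ?_ ?_
  · rw [commutator_def, commutator_def, Subgroup.map_commutator]
    exact Subgroup.commutator_mono le_top le_top
  · have decompose (e : E) : ∃ x, (φ x)⁻¹ * e ∈ Subgroup.center E := by
      obtain ⟨x, hx⟩ := hφ (π e)
      exact ⟨x, hπ (by simp_all)⟩
    rw [commutator_def, Subgroup.commutator_le]
    rintro e₁ - e₂ -
    obtain ⟨x₁, hz₁⟩ := decompose e₁
    obtain ⟨x₂, hz₂⟩ := decompose e₂
    rw [← mul_inv_cancel_left (φ x₁) e₁, ← mul_inv_cancel_left (φ x₂) e₂,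
      commutatorElement_mul_mul_of_mem_center _ _ hz₁ hz₂, ← map_commutatorElement]
    exact Subgroup.mem_map_of_mem φ
      (Subgroup.commutator_mem_commutator (Subgroup.mem_top _) (Subgroup.mem_top _))

theorem commutator_top_ker_comp_le_ker (hπ : π.ker ≤ Subgroup.center E) (φ : F →* E) :
    ⁅(⊤ : Subgroup F), (π.comp φ).ker⁆ ≤ φ.ker := by
  rw [Subgroup.commutator_le]
  rintro x - y hy
  rw [MonoidHom.mem_ker, map_commutatorElement, commutatorElement_eq_one_iff_commute]
  exact Subgroup.mem_center_iff.mp (hπ hy) (φ x)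

theorem map_ker_comp_inf_commutator (hπ : π.ker ≤ Subgroup.center E) (φ : F →* E)
    (hφ : Function.Surjective (π.comp φ)) :
    ((π.comp φ).ker ⊓ commutator F).map φ = π.ker ⊓ commutator E := by
  refine le_antisymm ?_ ?_
  · rintro _ ⟨x, ⟨hx, hcomm⟩, rfl⟩
    rw [← map_commutator_eq_of_ker_le_center hπ φ hφ]
    exact ⟨hx, Subgroup.mem_map_of_mem φ hcomm⟩
  · rintro e ⟨he, hcomm⟩
    rw [← map_commutator_eq_of_ker_le_center hπ φ hφ] at hcomm
    obtain ⟨x, hx, rfl⟩ := hcomm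
    exact ⟨x, ⟨he, hx⟩, rfl⟩

/-- `C ⊓ [E, E]` is a quotient of the Schur multiplier of `D`, for any central extension. -/
theorem grpRank_ker_inf_commutator_le_schurMultiplierRank (hπ : Function.Surjective π)
    (hcen : π.ker ≤ Subgroup.center E) :
    grpRank ↥(π.ker ⊓ commutator E) ≤ schurMultiplierRank D := by
  set φ : FreeGroup D →* E := FreeGroup.lift (Function.surjInv hπ)
  have hπφ : π.comp φ = FreeGroup.lift id :=
    FreeGroup.ext_hom _ _ fun d ↦ by simp [φ, Function.surjInv_eq hπ]
  have hφ : Function.Surjective (π.comp φ) :=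
    fun d ↦ ⟨FreeGroup.of d, by simp [hπφ]⟩
  rw [← map_ker_comp_inf_commutator hcen φ hφ, hπφ, ← QuotientGroup.lift_comp_mk' _ φ
    (hπφ ▸ commutator_top_ker_comp_le_ker hcen φ), ← Subgroup.map_map]
  exact grpRank_map_le _ _

end CentralExtension

theorem rank_le_schurMultiplierRank_of_centralExtension_general
    {E D : Type u} [Group E] [Group D]
    (C : Subgroup E) (hC : C ≤ Subgroup.center E)
    (π : E →* D) (hπ : Function.Surjective π) (hker : π.ker = C)
    (hEab : Finite (Abelianization E)) :
    grpRank C ≤ schurMultiplierRank D := by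
  subst hker
  calc grpRank π.ker
      ≤ grpRank ↥(π.ker ⊓ commutator E) :=
        grpRank_le_grpRank_inf _ _ fun c _ ↦ exists_pow_mem_commutator c
    _ ≤ schurMultiplierRank D := grpRank_ker_inf_commutator_le_schurMultiplierRank hπ hC

/-- If `1 → C → E → D → 1` is a central extension of a perfect group `D` such
that `E^{ab}` is finite, then `rk(C) ≤ rk(H₂(D))`. -/
theorem rank_le_schurMultiplierRank_of_centralExtension
    {E D : Type u} [Group E] [Group D]
    (hD : commutator D = ⊤)
    (C : Subgroup E) (hC : C ≤ Subgroup.center E)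
    (π : E →* D) (hπ : Function.Surjective π) (hker : π.ker = C)
    (hEab : Finite (Abelianization E)) :
    grpRank C ≤ schurMultiplierRank D :=
  rank_le_schurMultiplierRank_of_centralExtension_general C hC π hπ hker hEab
end

section
/- Let L be a finitely generated FAb group and ρ : L → D a surjective homomorphism with kernel R onto a group D that has no proper finite-index subgroups. For a finite-index normal subgroup L₀ of L, set R₀ = R ∩ L₀. Then rk(R₀/[L₀,R₀]) ≤ rk(H₂(D)). -/
open scoped TensorProduct

universe u

/-!
Present `D` as `F/N` with `F` free on `D`. Since `ρ(L₀)` has finite index in `D`, it is all of `D`,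
so the presentation lifts to `φ : F → L₀` with `ρ ∘ φ` the projection, and `φ` induces a map from
the Hopf model `(N ∩ [F,F])/[F,N]` of `H₂(D)` to `R₀/[L₀,R₀]`. This map has torsion cokernel:
`L₀` has finite abelianization, so every `r ∈ R₀` has a power in `[L₀,L₀]`; and as `L₀ = φ(F)R₀`
with `R₀` central modulo `[L₀,R₀]`, we get `[L₀,L₀] ⊆ φ([F,F])[L₀,R₀]`. Tensoring with `ℚ` kills
the torsion cokernel.
-/

open scoped Pointwise commutatorElement

section Rank

variable {G H : Type u} [Group G] [Group H]

theorem rank_rat_tensor_le_of_exists_zsmul_mem_range {A B : Type u} [AddCommGroup A]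
    [AddCommGroup B] (f : A →+ B) (h : ∀ b : B, ∃ n : ℤ, n ≠ 0 ∧ n • b ∈ f.range) :
    Module.rank ℚ (ℚ ⊗[ℤ] B) ≤ Module.rank ℚ (ℚ ⊗[ℤ] A) := by
  refine LinearMap.rank_le_of_surjective (f.toIntLinearMap.baseChange ℚ) fun y => ?_
  induction y using TensorProduct.induction_on with
  | zero => exact ⟨0, map_zero _⟩
  | tmul q b =>
    obtain ⟨n, hn, a, ha⟩ := h b
    refine ⟨((n : ℚ)⁻¹ * q) ⊗ₜ a, ?_⟩
    rw [LinearMap.baseChange_tmul, AddMonoidHom.coe_toIntLinearMap, ha, TensorProduct.tmul_smul,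
      TensorProduct.smul_tmul', zsmul_eq_mul, ← mul_assoc,
      mul_inv_cancel₀ (Int.cast_ne_zero.mpr hn), one_mul]
  | add x y hx hy =>
    obtain ⟨x', rfl⟩ := hx
    obtain ⟨y', rfl⟩ := hy
    exact ⟨x' + y', map_add _ _ _⟩

theorem grpRank_le_of_exists_zpow_mem_range (f : G →* H)
    (h : ∀ x : H, ∃ n : ℤ, n ≠ 0 ∧ x ^ n ∈ f.range) : grpRank H ≤ grpRank G := by
  refine rank_rat_tensor_le_of_exists_zsmul_mem_range (Abelianization.map f).toAdditive
    fun b => ?_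
  obtain ⟨x, hx⟩ := QuotientGroup.mk_surjective b.toMul
  obtain ⟨n, hn, g, hg⟩ := h x
  refine ⟨n, hn, .ofMul (Abelianization.of g), ?_⟩
  change Additive.ofMul (Abelianization.map f (Abelianization.of g)) = n • b
  rw [Abelianization.map_of, hg, map_zpow, show Abelianization.of x = b.toMul from hx, ofMul_zpow,
    ofMul_toMul]

theorem grpRank_congr (e : G ≃* H) : grpRank G = grpRank H :=
  (LinearEquiv.baseChange ℤ ℚ _ _ e.abelianizationCongr.toAdditive.toIntLinearEquiv).rank_eq

end Rank

section Commutator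

variable {G : Type u} [Group G]

noncomputable def quotientSubgroupOfMulEquivMap (N H : Subgroup G) [N.Normal] :
    H ⧸ N.subgroupOf H ≃* H.map (QuotientGroup.mk' N) :=
  (QuotientGroup.quotientMulEquivOfEq (by
      ext x
      rw [Subgroup.mem_subgroupOf, MonoidHom.mem_ker, ← Subtype.val_inj]
      exact (QuotientGroup.eq_one_iff _).symm)).trans
    (QuotientGroup.quotientKerEquivOfSurjective _ ((QuotientGroup.mk' N).subgroupMap_surjective H))

theorem Subgroup.exists_pow_mem_commutator_of_finite_abelianization (K : Subgroup G)
    [Finite (Abelianization K)] {x : G} (hx : x ∈ K) : ∃ n : ℕ, n ≠ 0 ∧ x ^ n ∈ ⁅K, K⁆ := by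
  refine ⟨orderOf (Abelianization.of (⟨x, hx⟩ : K)), (orderOf_pos _).ne', ?_⟩
  rw [← K.map_subtype_commutator, ← Abelianization.ker_of]
  exact ⟨⟨x, hx⟩ ^ _, MonoidHom.mem_ker.2 (by rw [map_pow, pow_orderOf_eq_one]), rfl⟩

theorem Subgroup.commutator_le_commutator_sup_of_le_sup {A B K : Subgroup G} [K.Normal]
    [B.Normal] (hB : B ≤ K) (hK : K ≤ A ⊔ B) : ⁅K, K⁆ ≤ ⁅A, A⁆ ⊔ ⁅K, B⁆ := by
  rw [Subgroup.commutator_le]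
  intro g₁ hg₁ g₂ hg₂
  obtain ⟨a₁, ha₁, b₁, hb₁, rfl⟩ : g₁ ∈ (A : Set G) * B := mul_normal A B ▸ hK hg₁
  obtain ⟨a₂, ha₂, b₂, hb₂, rfl⟩ : g₂ ∈ (A : Set G) * B := mul_normal A B ▸ hK hg₂
  have ha₁K : a₁ ∈ K := by simpa using mul_mem hg₁ (inv_mem (hB hb₁))
  have hsplit : ⁅a₁ * b₁, a₂ * b₂⁆ =
      a₁ * ⁅a₂ * b₂, b₁⁆⁻¹ * a₁⁻¹ * ⁅a₁, a₂⁆ * (a₂ * ⁅a₁, b₂⁆ * a₂⁻¹) := by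
    simp only [commutatorElement_def]
    group
  rw [hsplit]
  refine mul_mem (mul_mem (mem_sup_right ?_) (mem_sup_left (commutator_mem_commutator ha₁ ha₂)))
    (mem_sup_right ?_)
  · exact (commutator_normal K B).conj_mem _ (inv_mem (commutator_mem_commutator hg₂ hb₁)) a₁
  · exact (commutator_normal K B).conj_mem _ (commutator_mem_commutator ha₁K hb₂) a₂

end Commutator

section SchurMultiplier

variable {G D : Type u} [Group G] [Group D]

theorem exists_freeGroup_lift_range_le (ρ : G →* D) (H : Subgroup G) (hH : H.map ρ = ⊤) :
    ∃ φ : FreeGroup D →* G, φ.range ≤ H ∧ ρ.comp φ = FreeGroup.lift id := by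
  choose s hsH hs using fun d : D => (hH ▸ Subgroup.mem_top d : d ∈ H.map ρ)
  exact ⟨FreeGroup.lift s, FreeGroup.range_lift_le (Set.range_subset_iff.2 hsH),
    FreeGroup.ext_hom _ _ fun d => by simp [hs]⟩

theorem le_range_sup_ker_inf {ρ : G →* D} {H : Subgroup G} {φ : FreeGroup D →* G}
    (hφ : ρ.comp φ = FreeGroup.lift id) (hφH : φ.range ≤ H) : H ≤ φ.range ⊔ (ρ.ker ⊓ H) := by
  intro h hh
  set a := φ (FreeGroup.of (ρ h))
  have ha : ρ a = ρ h := by simpa using DFunLike.congr_fun hφ (FreeGroup.of (ρ h))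
  have hr : a⁻¹ * h ∈ ρ.ker ⊓ H :=
    Subgroup.mem_inf.2 ⟨by simp [ha], mul_mem (inv_mem (hφH ⟨_, rfl⟩)) hh⟩
  simpa using Subgroup.mul_mem_sup (MonoidHom.mem_range.2 ⟨_, rfl⟩ : a ∈ φ.range) hr

theorem exists_pow_eq_mul_of_mem_ker_inf {ρ : G →* D} {H : Subgroup G} [H.Normal]
    [Finite (Abelianization H)] {φ : FreeGroup D →* G} (hφ : ρ.comp φ = FreeGroup.lift id)
    (hφH : φ.range ≤ H) {r : G} (hr : r ∈ ρ.ker ⊓ H) :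
    ∃ n : ℕ, n ≠ 0 ∧ ∃ w ∈ (FreeGroup.lift id).ker ⊓ commutator (FreeGroup D),
      ∃ k ∈ ⁅H, ρ.ker ⊓ H⁆, r ^ n = φ w * k := by
  obtain ⟨n, hn, hrn⟩ := H.exists_pow_mem_commutator_of_finite_abelianization hr.2
  have hHH : ⁅H, H⁆ ≤ (commutator (FreeGroup D)).map φ ⊔ ⁅H, ρ.ker ⊓ H⁆ := by
    rw [commutator_def, Subgroup.map_commutator, ← MonoidHom.range_eq_map]
    exact Subgroup.commutator_le_commutator_sup_of_le_sup inf_le_right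
      (le_range_sup_ker_inf hφ hφH)
  obtain ⟨_, ⟨w, hw, rfl⟩, k, hk, hwk⟩ :
      r ^ n ∈ ((commutator (FreeGroup D)).map φ : Set G) * ⁅H, ρ.ker ⊓ H⁆ :=
    Subgroup.mul_normal ((commutator (FreeGroup D)).map φ) ⁅H, ρ.ker ⊓ H⁆ ▸ hHH hrn
  have hkR : k ∈ ρ.ker := (Subgroup.commutator_le_right _ _ hk).1
  refine ⟨n, hn, w, Subgroup.mem_inf.2 ⟨?_, hw⟩, k, hk, hwk.symm⟩
  rw [MonoidHom.mem_ker, ← hφ, MonoidHom.comp_apply, eq_mul_inv_of_mul_eq hwk, map_mul, map_inv,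
    map_pow, hr.1, hkR]
  simp

theorem grpRank_ker_inf_quotient_le_schurMultiplierRank (ρ : G →* D) (H : Subgroup G)
    [H.Normal] [Finite (Abelianization H)] (hH : H.map ρ = ⊤) :
    grpRank ((ρ.ker ⊓ H : Subgroup G) ⧸ (⁅H, ρ.ker ⊓ H⁆.subgroupOf (ρ.ker ⊓ H))) ≤
      schurMultiplierRank D := by
  obtain ⟨φ, hφH, hφ⟩ := exists_freeGroup_lift_range_le ρ H hH
  set N := (FreeGroup.lift (id : D → D)).ker
  set K := ⁅H, ρ.ker ⊓ H⁆
  have hφN : N.map φ ≤ ρ.ker ⊓ H := by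
    rintro _ ⟨w, hw, rfl⟩
    exact Subgroup.mem_inf.2
      ⟨by rwa [MonoidHom.mem_ker, ← MonoidHom.comp_apply, hφ], hφH ⟨w, rfl⟩⟩
  let Φ : FreeGroup D ⧸ ⁅⊤, N⁆ →* G ⧸ K := QuotientGroup.map _ _ φ <| by
    rw [← Subgroup.map_le_iff_le_comap, Subgroup.map_commutator, ← MonoidHom.range_eq_map]
    exact Subgroup.commutator_mono hφH hφN
  let M := (N ⊓ commutator (FreeGroup D)).map
    (QuotientGroup.mk' ⁅(⊤ : Subgroup (FreeGroup D)), N⁆)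
  let ψ : M →* (ρ.ker ⊓ H).map (QuotientGroup.mk' K) :=
    (Φ.comp M.subtype).codRestrict _ <| by
      rintro ⟨_, w, hw, rfl⟩
      exact ⟨φ w, hφN ⟨w, hw.1, rfl⟩, rfl⟩
  rw [grpRank_congr (quotientSubgroupOfMulEquivMap K _)]
  refine grpRank_le_of_exists_zpow_mem_range ψ ?_
  rintro ⟨_, r, hr, rfl⟩
  obtain ⟨n, hn, w, hw, k, hk, hrn⟩ := exists_pow_eq_mul_of_mem_ker_inf hφ hφH hr
  refine ⟨n, by exact_mod_cast hn, ⟨_, w, hw, rfl⟩, Subtype.ext ?_⟩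
  rw [Subgroup.coe_zpow, zpow_natCast]
  change QuotientGroup.mk (φ w) = QuotientGroup.mk r ^ n
  rw [← QuotientGroup.mk_pow, hrn, QuotientGroup.mk_mul, (QuotientGroup.eq_one_iff k).2 hk, mul_one]

end SchurMultiplier

theorem rank_quotient_le_schurMultiplierRank_general
    {L D : Type u} [Group L] [Group D]
    (hFAb : IsFAb L)
    (ρ : L →* D) (hsurj : Function.Surjective ρ)
    (hD : ∀ H : Subgroup D, H.FiniteIndex → H = ⊤)
    (L₀ : Subgroup L) [L₀.Normal] [L₀.FiniteIndex] :
    grpRank ((ρ.ker ⊓ L₀ : Subgroup L) ⧸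
        (⁅L₀, ρ.ker ⊓ L₀⁆.subgroupOf (ρ.ker ⊓ L₀))) ≤
      schurMultiplierRank D := by
  have hρL₀ : L₀.map ρ = ⊤ := hD _
    ⟨fun h => Subgroup.FiniteIndex.index_ne_zero (zero_dvd_iff.1 (h ▸ L₀.index_map_dvd hsurj))⟩
  have := hFAb L₀ inferInstance
  exact grpRank_ker_inf_quotient_le_schurMultiplierRank ρ L₀ hρL₀

/-- Let `L` be a finitely generated FAb group and `ρ : L → D` a surjective
homomorphism with kernel `R` onto a group `D` with no proper finite-index
subgroups.  For a finite-index normal subgroup `L₀` of `L` and `R₀ = R ⊓ L₀`,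
one has `rk(R₀/[L₀,R₀]) ≤ rk(H₂(D))`. -/
theorem rank_quotient_le_schurMultiplierRank
    {L D : Type u} [Group L] [Group D]
    (hfg : Group.FG L) (hFAb : IsFAb L)
    (ρ : L →* D) (hsurj : Function.Surjective ρ)
    (hD : ∀ H : Subgroup D, H.FiniteIndex → H = ⊤)
    (L₀ : Subgroup L) [L₀.Normal] [L₀.FiniteIndex] :
    grpRank ((ρ.ker ⊓ L₀ : Subgroup L) ⧸
        (⁅L₀, ρ.ker ⊓ L₀⁆.subgroupOf (ρ.ker ⊓ L₀))) ≤
      schurMultiplierRank D :=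
  rank_quotient_le_schurMultiplierRank_general hFAb ρ hsurj hD L₀
end

section
/- Let L be a finitely generated FAb group and R a normal subgroup of L such that the quotient L/R has no proper finite-index subgroups. Assume that for every finite-index normal subgroup L₂ of L, the commutator subgroup [L₂, R] has finite index in R. Then for every finite-index normal subgroup L₁ of L and every finite-index subgroup R₁ of R that is normal in L, the commutator subgroup [L₁, R₁] has finite index in R₁. -/
namespace Subgroup

variable {G : Type*} [Group G]

theorem finiteIndex_centralizer_of_finite (M : Subgroup G) [M.Normal] [Finite M] :
    (centralizer (M : Set G)).FiniteIndex := by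
  have : Finite (MulAut M) := Finite.of_injective _ DFunLike.coe_injective
  refine finiteIndex_of_le (H := (MulAut.conjNormal : G →* MulAut M).ker) fun g hg m hm ↦ ?_
  have hconj : g * m * g⁻¹ = m := by
    simpa [MulAut.conjNormal_apply] using congrArg (fun e : MulAut M ↦ (e ⟨m, hm⟩ : G)) hg
  exact (mul_inv_eq_iff_eq_mul.mp hconj).symm

theorem le_iff_map_mk'_eq_bot {H K : Subgroup G} [K.Normal] :
    H ≤ K ↔ H.map (QuotientGroup.mk' K) = ⊥ := by
  rw [map_eq_bot_iff, QuotientGroup.ker_mk']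

theorem finite_map_mk'_of_finiteIndex_subgroupOf (R R₁ : Subgroup G) [R₁.Normal]
    [(R₁.subgroupOf R).FiniteIndex] :
    Finite (R.map (QuotientGroup.mk' R₁)) := by
  let f : R →* G ⧸ R₁ := (QuotientGroup.mk' R₁).comp R.subtype
  have hker : f.ker = R₁.subgroupOf R := by ext; simp [f, QuotientGroup.eq_one_iff, mem_subgroupOf]
  have hrange : f.range = R.map (QuotientGroup.mk' R₁) := by
    rw [MonoidHom.range_comp, range_subtype]
  have : Finite (R ⧸ f.ker) := by rw [hker]; infer_instance
  rw [← hrange]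
  exact Finite.of_equiv _ (QuotientGroup.quotientKerEquivRange f).toEquiv

theorem exists_normal_finiteIndex_commutator_le (R R₁ : Subgroup G) [R.Normal] [R₁.Normal]
    [(R₁.subgroupOf R).FiniteIndex] :
    ∃ N : Subgroup G, N.Normal ∧ N.FiniteIndex ∧ ⁅N, R⁆ ≤ R₁ := by
  let π := QuotientGroup.mk' R₁
  have := finite_map_mk'_of_finiteIndex_subgroupOf R R₁
  have := finiteIndex_centralizer_of_finite (R.map π)
  refine ⟨(centralizer (R.map π : Set (G ⧸ R₁))).comap π, inferInstance,
    ⟨by rw [index_comap_of_surjective _ (QuotientGroup.mk'_surjective R₁)]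
        exact FiniteIndex.index_ne_zero⟩, ?_⟩
  rw [le_iff_map_mk'_eq_bot, map_commutator, commutator_eq_bot_iff_le_centralizer]
  exact map_comap_le _ _

theorem commutator_commutator_le_of_rotate {H₁ H₂ H₃ K : Subgroup G} [K.Normal]
    (h1 : ⁅⁅H₂, H₃⁆, H₁⁆ ≤ K) (h2 : ⁅⁅H₃, H₁⁆, H₂⁆ ≤ K) : ⁅⁅H₁, H₂⁆, H₃⁆ ≤ K := by
  simp only [le_iff_map_mk'_eq_bot, map_commutator] at h1 h2 ⊢
  exact commutator_commutator_eq_bot_of_rotate h1 h2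

theorem commutator_commutator_le_of_commutator_le {A B C D K : Subgroup G} [K.Normal]
    (hAB : A ≤ B) (hAC : ⁅A, C⁆ ≤ D) (hBD : ⁅B, D⁆ ≤ K) : ⁅⁅A, A⁆, C⁆ ≤ K := by
  have h : ⁅⁅A, C⁆, A⁆ ≤ K := by
    rw [commutator_comm]
    exact (commutator_mono hAB hAC).trans hBD
  exact commutator_commutator_le_of_rotate h (commutator_comm C A ▸ h)

end Subgroup

theorem IsFAb.finiteIndex_commutator {G : Type*} [Group G] (hG : IsFAb G) (H : Subgroup G)
    [H.FiniteIndex] : (⁅H, H⁆ : Subgroup G).FiniteIndex := by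
  have : Finite (H ⧸ commutator H) := hG H ‹_›
  have : (commutator H).FiniteIndex := Subgroup.finiteIndex_of_finite_quotient
  rw [← H.map_subtype_commutator]
  exact ⟨by
    rw [Subgroup.index_map_subtype]
    exact mul_ne_zero Subgroup.FiniteIndex.index_ne_zero Subgroup.FiniteIndex.index_ne_zero⟩

open Subgroup

theorem commutator_finiteIndex_of_finiteIndex_general
    {L : Type*} [Group L] (hFAb : IsFAb L)
    (R : Subgroup L) [R.Normal]
    (hmax : ∀ L₂ : Subgroup L, L₂.Normal → L₂.FiniteIndex →
      (⁅L₂, R⁆.subgroupOf R).FiniteIndex) :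
    ∀ L₁ : Subgroup L, L₁.Normal → L₁.FiniteIndex →
      ∀ R₁ : Subgroup L, R₁ ≤ R → (R₁.subgroupOf R).FiniteIndex → R₁.Normal →
        (⁅L₁, R₁⁆.subgroupOf R₁).FiniteIndex := by
  intro L₁ _ _ R₁ hR₁R _ _
  obtain ⟨N, _, _, hNR⟩ := exists_normal_finiteIndex_commutator_le R R₁
  have hL₂R : ⁅L₁ ⊓ N, R⁆ ≤ R₁ := (commutator_mono inf_le_right le_rfl).trans hNR
  have hL₃ := hFAb.finiteIndex_commutator (L₁ ⊓ N)
  have hL₃R : (⁅⁅L₁ ⊓ N, L₁ ⊓ N⁆, R⁆).IsFiniteRelIndex R :=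
    isFiniteRelIndex_iff_finiteIndex.mpr (hmax _ inferInstance hL₃)
  have hKR : (⁅L₁, R₁⁆).IsFiniteRelIndex R := isFiniteRelIndex_of_le_left R
    (commutator_commutator_le_of_commutator_le inf_le_left hL₂R le_rfl)
  exact isFiniteRelIndex_iff_finiteIndex.mp (isFiniteRelIndex_of_le_right _ hR₁R)

/-- Let `L` be a finitely generated FAb group and `R` a normal subgroup such
that `L/R` has no proper finite-index subgroups, and suppose `[L₂, R]` has
finite index in `R` for every finite-index normal subgroup `L₂` of `L`.  Then
for every finite-index normal subgroup `L₁` of `L` and every finite-index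
subgroup `R₁` of `R` normal in `L`, the commutator `[L₁, R₁]` has finite
index in `R₁`. -/
theorem commutator_finiteIndex_of_finiteIndex
    {L : Type*} [Group L] (hfg : Group.FG L) (hFAb : IsFAb L)
    (R : Subgroup L) [R.Normal]
    (hD : ∀ H : Subgroup (L ⧸ R), H.FiniteIndex → H = ⊤)
    (hmax : ∀ L₂ : Subgroup L, L₂.Normal → L₂.FiniteIndex →
      (⁅L₂, R⁆.subgroupOf R).FiniteIndex) :
    ∀ L₁ : Subgroup L, L₁.Normal → L₁.FiniteIndex →
      ∀ R₁ : Subgroup L, R₁ ≤ R → (R₁.subgroupOf R).FiniteIndex → R₁.Normal →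
        (⁅L₁, R₁⁆.subgroupOf R₁).FiniteIndex :=
  commutator_finiteIndex_of_finiteIndex_general hFAb R hmax
end

section
/- Let E be a finitely generated FAb group and C a central subgroup of E such that the quotient D = E/C has no proper finite-index subgroups. Then the intersection of all finite-index subgroups of E has finite index in E; that is, the profinite completion of E is finite. -/
/-- A subgroup contained in the center is normal. -/
theorem normal_of_le_center {E : Type*} [Group E] {C : Subgroup E}
    (hC : C ≤ Subgroup.center E) : C.Normal :=
  ⟨fun n hn g => by
    rw [Subgroup.mem_center_iff.mp (hC hn) g, mul_assoc, mul_inv_cancel, mul_one]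
    exact hn⟩

/-!
Since `E` is FAb, its commutator subgroup `[E, E]` has finite index, so it suffices to show that
`[E, E]` lies in every finite-index subgroup `K`. The image of `K` in `E/C` has finite index, hence
is everything, i.e. `E = K C`. As `C` is central, every commutator `[k c, k' c']` equals `[k, k']`,
so `[E, E] = [K, K] ≤ K`.
-/

section

open scoped commutatorElement

open Subgroup

variable {G : Type*} [Group G]

theorem commutatorElement_mul_left_of_mem_center {c : G} (hc : c ∈ center G) (a b : G) :
    ⁅a * c, b⁆ = ⁅a, b⁆ := by
  have hcb : ⁅c, b⁆ = 1 := commutatorElement_eq_one_iff_mul_comm.2 (mem_center_iff.1 hc b).symm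
  rw [commutatorElement_mul_left_eq_conj_mul, hcb, mul_one, mul_inv_cancel, one_mul]

theorem commutatorElement_mul_right_of_mem_center {c : G} (hc : c ∈ center G) (a b : G) :
    ⁅a, b * c⁆ = ⁅a, b⁆ := by
  have hac : ⁅a, c⁆ = 1 := commutatorElement_eq_one_iff_mul_comm.2 (mem_center_iff.1 hc a)
  rw [commutatorElement_mul_right_eq_mul_conj, hac, mul_one, mul_inv_cancel_right]

theorem commutator_le_of_sup_eq_top {K C : Subgroup G} (hC : C ≤ center G) (hKC : K ⊔ C = ⊤) :
    commutator G ≤ K := by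
  have := normal_of_le_center hC
  rw [_root_.commutator_def, ← hKC, commutator_le]
  intro a ha b hb
  obtain ⟨k, hk, c, hc, rfl⟩ := mem_sup_of_normal_right.1 ha
  obtain ⟨k', hk', c', hc', rfl⟩ := mem_sup_of_normal_right.1 hb
  rw [commutatorElement_mul_left_of_mem_center (hC hc),
    commutatorElement_mul_right_of_mem_center (hC hc')]
  exact K.commutator_le_self (commutator_mem_commutator hk hk')

theorem Subgroup.FiniteIndex.map_of_surjective {H : Type*} [Group H] {f : G →* H}
    (hf : Function.Surjective f) {K : Subgroup G} (hK : K.FiniteIndex) : (K.map f).FiniteIndex :=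
  ⟨fun h => hK.index_ne_zero (Nat.eq_zero_of_zero_dvd (h ▸ K.index_map_dvd hf))⟩

theorem sup_eq_top_of_map_mk'_eq_top {K N : Subgroup G} [N.Normal]
    (h : K.map (QuotientGroup.mk' N) = ⊤) : K ⊔ N = ⊤ := by
  rw [← QuotientGroup.ker_mk' N, ← comap_map_eq, h, comap_top]

theorem IsFAb.finiteIndex_commutator_s12 (hG : IsFAb G) : (commutator G).FiniteIndex := by
  have := hG ⊤ inferInstance
  have : Finite (G ⧸ commutator G) := .of_equiv _ topEquiv.abelianizationCongr.toEquiv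
  exact finiteIndex_of_finite_quotient

end

theorem finiteIndex_iInf_of_central_quotient_general
    {E : Type*} [Group E] (hFAb : IsFAb E)
    (C : Subgroup E) (hC : C ≤ Subgroup.center E)
    (hD : haveI : C.Normal := normal_of_le_center hC
      ∀ H : Subgroup (E ⧸ C), H.FiniteIndex → H = ⊤) :
    (⨅ K ∈ {K : Subgroup E | K.FiniteIndex}, K).FiniteIndex := by
  have : C.Normal := normal_of_le_center hC
  have := hFAb.finiteIndex_commutator_s12
  refine Subgroup.finiteIndex_of_le (H := commutator E) <|
    le_iInf₂ fun K (hK : K.FiniteIndex) => ?_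
  have hKC : K ⊔ C = ⊤ :=
    sup_eq_top_of_map_mk'_eq_top (hD _ (hK.map_of_surjective (QuotientGroup.mk'_surjective C)))
  exact commutator_le_of_sup_eq_top hC hKC

/-- Let `E` be a finitely generated FAb group and `C` a central subgroup such
that `E/C` has no proper finite-index subgroups.  Then the intersection of
all finite-index subgroups of `E` has finite index in `E` (equivalently, the
profinite completion of `E` is finite). -/
theorem finiteIndex_iInf_of_central_quotient
    {E : Type*} [Group E] (hfg : Group.FG E) (hFAb : IsFAb E)
    (C : Subgroup E) (hC : C ≤ Subgroup.center E)
    (hD : haveI : C.Normal := normal_of_le_center hC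
      ∀ H : Subgroup (E ⧸ C), H.FiniteIndex → H = ⊤) :
    (⨅ K ∈ {K : Subgroup E | K.FiniteIndex}, K).FiniteIndex :=
  finiteIndex_iInf_of_central_quotient_general hFAb C hC hD
end
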